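/- arXiv:1907.07385 — 13 statements merged into one kernel-verified Lean document; each statement's English description precedes it below -/
import Mathlib

section
/- Let F be a field of characteristic zero and let f ∈ ℍ[F] with f ≠ 0 and f ≠ 1. Then f is an idempotent (f * f = f) if and only if re f = 1/2 and normSq f = 0 (equivalently, re f = 1/2 and normSq (im f) = −1/4). -/
open Quaternion

theorem idempotent_iff_re_half_normSq_zero (F : Type*) [Field F] [CharZero F]
    (f : ℍ[F]) (hf0 : f ≠ 0) (hf1 : f ≠ 1) :
    (f * f = f ↔ f.re = 1 / 2 ∧ Quaternion.normSq f = 0) ∧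
    (f * f = f ↔ f.re = 1 / 2 ∧ Quaternion.normSq f.im = -(1 / 4)) := by
  simp only [Quaternion.ext_iff, Quaternion.normSq_def', Quaternion.re_mul,
    Quaternion.imI_mul, Quaternion.imJ_mul, Quaternion.imK_mul,
    Quaternion.re_im, Quaternion.imI_im, Quaternion.imJ_im, Quaternion.imK_im] at *
  obtain ⟨r, a, b, c⟩ := f
  have key : (r * r - a * a - b * b - c * c = r ∧
      r * a + a * r + b * c - c * b = a ∧ r * b - a * c + b * r + c * a = b ∧
        r * c + a * b - b * a + c * r = c) ↔
      (r = 1 / 2 ∧ r ^ 2 + a ^ 2 + b ^ 2 + c ^ 2 = 0) := by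
    constructor
    · rintro ⟨h1, h2, h3, h4⟩
      by_cases hr : r = 1 / 2
      · exact ⟨hr, by linear_combination -h1 + 2 * r * hr⟩
      · exfalso
        have h2r : 2 * r - 1 ≠ 0 := fun h => hr (by linear_combination h / 2)
        have ha : a = 0 := by
          have h : a * (2 * r - 1) = 0 := by linear_combination h2
          rcases mul_eq_zero.mp h with h | h
          · exact h
          · exact absurd h h2r
        have hb : b = 0 := by
          have h : b * (2 * r - 1) = 0 := by linear_combination h3
          rcases mul_eq_zero.mp h with h | h
          · exact h
          · exact absurd h h2r
        have hc : c = 0 := by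
          have h : c * (2 * r - 1) = 0 := by linear_combination h4
          rcases mul_eq_zero.mp h with h | h
          · exact h
          · exact absurd h h2r
        subst ha hb hc
        have h : r * (r - 1) = 0 := by linear_combination h1
        rcases mul_eq_zero.mp h with h | h
        · exact hf0 (by simp [QuaternionAlgebra.ext_iff, h]; rfl)
        · exact hf1 (by simp [QuaternionAlgebra.ext_iff, show r = 1 by linear_combination h]; rfl)
    · rintro ⟨hr, hn⟩
      subst hr
      exact ⟨by linear_combination -hn, by ring, by ring, by ring⟩
  refine ⟨key, key.trans ?_⟩
  constructor <;> rintro ⟨hr, hn⟩ <;> exact ⟨hr, by subst hr; linear_combination hn⟩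
end

section
/- Let F be a field of characteristic zero and let f ∈ ℍ[F] be a nonzero zero divisor (f ≠ 0, normSq f = 0). Then: (a) there exists δ ∈ {1, i, j, k} with re (f * δ) ≠ 0; (b) for every δ ∈ ℍ[F] with normSq δ = 1 and re (f * δ) ≠ 0, there exists an idempotent σ ∈ ℍ[F] (σ * σ = σ) such that f = (2 · re (f * δ)) • (σ * star δ); in particular, if re f ≠ 0 then f = (2 · re f) • σ for some idempotent σ. -/
open Quaternion

private lemma quat_sq_eq {F : Type*} [Field F] (q : ℍ[F]) :
    q * q = (2 * q.re) • q - (Quaternion.normSq q) • 1 := by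
  ext <;>
    simp [Quaternion.normSq_def', Quaternion.re_mul, Quaternion.imI_mul,
      Quaternion.imJ_mul, Quaternion.imK_mul] <;> ring

theorem zero_divisor_eq_smul_idempotent (F : Type*) [Field F] [CharZero F]
    (f : ℍ[F]) (hf : f ≠ 0) (hfs : Quaternion.normSq f = 0) :
    (∃ δ ∈ ({1, ⟨0, 1, 0, 0⟩, ⟨0, 0, 1, 0⟩, ⟨0, 0, 0, 1⟩} : Set ℍ[F]), (f * δ).re ≠ 0) ∧
    (∀ δ : ℍ[F], Quaternion.normSq δ = 1 → (f * δ).re ≠ 0 →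
      ∃ σ : ℍ[F], σ * σ = σ ∧ f = (2 * (f * δ).re) • (σ * star δ)) ∧
    (f.re ≠ 0 → ∃ σ : ℍ[F], σ * σ = σ ∧ f = (2 * f.re) • σ) := by
  have key : ∀ δ : ℍ[F], Quaternion.normSq δ = 1 → (f * δ).re ≠ 0 →
      ∃ σ : ℍ[F], σ * σ = σ ∧ f = (2 * (f * δ).re) • (σ * star δ) := by
    intro δ hδ hr
    set r : F := (f * δ).re with hrdef
    have h2r : (2 : F) * r ≠ 0 := mul_ne_zero two_ne_zero hr
    refine ⟨((2 * r)⁻¹) • (f * δ), ?_, ?_⟩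
    · have hns : Quaternion.normSq (f * δ) = 0 := by
        rw [map_mul, hfs, zero_mul]
      have hsq : (f * δ) * (f * δ) = (2 * r) • (f * δ) := by
        rw [quat_sq_eq, hns, zero_smul, sub_zero]
      rw [smul_mul_smul_comm, hsq, smul_smul]
      congr 1
      field_simp
    · have hds : δ * star δ = 1 := by
        rw [Quaternion.self_mul_star, hδ]; simp
      rw [smul_mul_assoc, mul_assoc, hds, mul_one, smul_smul,
        mul_inv_cancel₀ h2r, one_smul]
  refine ⟨?_, key, ?_⟩
  · by_contra h
    push_neg at h
    apply hf
    have h1 := h 1 (by simp)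
    have h2 := (Quaternion.re_mul f ⟨0, 1, 0, 0⟩).symm.trans (h ⟨0, 1, 0, 0⟩ (Set.mem_insert_of_mem _ (Set.mem_insert _ _)))
    have h3 := (Quaternion.re_mul f ⟨0, 0, 1, 0⟩).symm.trans (h ⟨0, 0, 1, 0⟩ (Set.mem_insert_of_mem _ (Set.mem_insert_of_mem _ (Set.mem_insert _ _))))
    have h4 := (Quaternion.re_mul f ⟨0, 0, 0, 1⟩).symm.trans (h ⟨0, 0, 0, 1⟩ (Set.mem_insert_of_mem _ (Set.mem_insert_of_mem _ (Set.mem_insert_of_mem _ (Set.mem_singleton _)))))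
    simp only [Quaternion.re_mul, mul_one] at h1 h2 h3 h4
    ext <;> simp_all
  · intro hre
    obtain ⟨σ, hσ, hfeq⟩ := key 1 (by simp) (by simpa using hre)
    exact ⟨σ, hσ, by simpa using hfeq⟩
end

section
/- Let F be a field of characteristic zero, let a, b ∈ ℍ[F] be nonzero, and suppose normSq a = 0 or normSq b = 0 (so that χ ↦ a * χ * b is not bijective). Then for c ∈ ℍ[F] the equation a * χ * b = c has a solution χ ∈ ℍ[F] if and only if both of the following hold: if normSq a = 0 then star a * c = 0, and if normSq b = 0 then c * star b = 0. (The condition star a * c = 0 is equivalent to σ * c = c for the idempotent σ attached to the zero divisor a, and c * star b = 0 to c * ρ = c for the idempotent ρ attached to b.) -/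
open Quaternion

lemma aux_left {F : Type*} [Field F] [CharZero F] (a d : ℍ[F]) (ha : a ≠ 0)
    (h0 : Quaternion.normSq a = 0) (h : star a * d = 0) : ∃ q : ℍ[F], a * (q * d) = d := by
  by_cases ht : a.re = 0
  · have hsa : star a = -a := Quaternion.star_eq_neg.mpr ht
    have had : a * d = 0 := by
      have := h; rw [hsa, neg_mul, neg_eq_zero] at this; exact this
    have him : a.imI ≠ 0 ∨ a.imJ ≠ 0 ∨ a.imK ≠ 0 := by
      by_contra hcon
      push_neg at hcon
      exact ha (by ext <;> simp [ht, hcon.1, hcon.2.1, hcon.2.2])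
    obtain ⟨u, s, hs, key⟩ : ∃ (u : ℍ[F]) (s : F), s ≠ 0 ∧
        a * u = ((-(2 * s) : F) : ℍ[F]) - u * a := by
      rcases him with hI | hJ | hK
      · exact ⟨⟨0, 1, 0, 0⟩, a.imI, hI, by ext <;> simp [Quaternion.ext_iff, ht, Quaternion.re_mul a ⟨0, 1, 0, 0⟩, Quaternion.re_mul ⟨0, 1, 0, 0⟩ a, Quaternion.imI_mul a ⟨0, 1, 0, 0⟩, Quaternion.imI_mul ⟨0, 1, 0, 0⟩ a, Quaternion.imJ_mul a ⟨0, 1, 0, 0⟩, Quaternion.imJ_mul ⟨0, 1, 0, 0⟩ a, Quaternion.imK_mul a ⟨0, 1, 0, 0⟩, Quaternion.imK_mul ⟨0, 1, 0, 0⟩ a] <;> ring⟩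
      · exact ⟨⟨0, 0, 1, 0⟩, a.imJ, hJ, by ext <;> simp [Quaternion.ext_iff, ht, Quaternion.re_mul a ⟨0, 0, 1, 0⟩, Quaternion.re_mul ⟨0, 0, 1, 0⟩ a, Quaternion.imI_mul a ⟨0, 0, 1, 0⟩, Quaternion.imI_mul ⟨0, 0, 1, 0⟩ a, Quaternion.imJ_mul a ⟨0, 0, 1, 0⟩, Quaternion.imJ_mul ⟨0, 0, 1, 0⟩ a, Quaternion.imK_mul a ⟨0, 0, 1, 0⟩, Quaternion.imK_mul ⟨0, 0, 1, 0⟩ a] <;> ring⟩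
      · exact ⟨⟨0, 0, 0, 1⟩, a.imK, hK, by ext <;> simp [Quaternion.ext_iff, ht, Quaternion.re_mul a ⟨0, 0, 0, 1⟩, Quaternion.re_mul ⟨0, 0, 0, 1⟩ a, Quaternion.imI_mul a ⟨0, 0, 0, 1⟩, Quaternion.imI_mul ⟨0, 0, 0, 1⟩ a, Quaternion.imJ_mul a ⟨0, 0, 0, 1⟩, Quaternion.imJ_mul ⟨0, 0, 0, 1⟩ a, Quaternion.imK_mul a ⟨0, 0, 0, 1⟩, Quaternion.imK_mul ⟨0, 0, 0, 1⟩ a] <;> ring⟩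
    refine ⟨(-(2 * s))⁻¹ • u, ?_⟩
    have h2s : (-(2 * s) : F) ≠ 0 := by
      simp [hs]
    calc a * ((-(2 * s))⁻¹ • u * d) = (-(2 * s))⁻¹ • (a * u * d) := by
          rw [smul_mul_assoc, mul_smul_comm, mul_assoc]
      _ = (-(2 * s))⁻¹ • ((((-(2 * s) : F) : ℍ[F]) - u * a) * d) := by rw [key]
      _ = (-(2 * s))⁻¹ • (((-(2 * s) : F) : ℍ[F]) * d - u * (a * d)) := by
          rw [sub_mul, mul_assoc]
      _ = (-(2 * s))⁻¹ • ((-(2 * s) : F) • d) := by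
          rw [had, mul_zero, sub_zero, Quaternion.coe_mul_eq_smul]
      _ = d := by rw [smul_smul, inv_mul_cancel₀ h2s, one_smul]
  · have h2t : (2 * a.re : F) ≠ 0 := mul_ne_zero two_ne_zero ht
    have key : a * d = (2 * a.re : F) • d := by
      have := Quaternion.star_eq_two_re_sub (a := a)
      rw [this, sub_mul, sub_eq_zero] at h
      rw [← h, Quaternion.coe_mul_eq_smul]
    refine ⟨((2 * a.re)⁻¹ : F) • 1, ?_⟩
    rw [smul_mul_assoc, one_mul, mul_smul_comm, key, smul_smul, inv_mul_cancel₀ h2t, one_smul]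

lemma aux_right {F : Type*} [Field F] [CharZero F] (b d : ℍ[F]) (hb : b ≠ 0)
    (h0 : Quaternion.normSq b = 0) (h : d * star b = 0) : ∃ q : ℍ[F], (d * q) * b = d := by
  obtain ⟨q, hq⟩ := aux_left (star b) (star d) (star_ne_zero.mpr hb)
    (by rwa [Quaternion.normSq_star])
    (by have := congrArg star h; simpa using this)
  refine ⟨star q, ?_⟩
  have := congrArg star hq
  rwa [star_mul, star_mul, star_star, star_star] at this

theorem mulLeftRight_singular_solvability (F : Type*) [Field F] [CharZero F]
    (a b : ℍ[F]) (ha : a ≠ 0) (hb : b ≠ 0)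
    (hsing : Quaternion.normSq a = 0 ∨ Quaternion.normSq b = 0) (c : ℍ[F]) :
    (∃ χ : ℍ[F], a * χ * b = c) ↔
      ((Quaternion.normSq a = 0 → star a * c = 0) ∧
       (Quaternion.normSq b = 0 → c * star b = 0)) := by
  constructor
  · rintro ⟨χ, rfl⟩
    constructor
    · intro h0
      rw [← mul_assoc, ← mul_assoc, Quaternion.star_mul_self, h0]
      simp
    · intro h0
      rw [mul_assoc, mul_assoc, Quaternion.self_mul_star, h0]
      simp
  · rintro ⟨h1, h2⟩
    rcases hsing with h0a | h0b
    · by_cases h0b : Quaternion.normSq b = 0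
      · -- both singular
        obtain ⟨q, hq⟩ := aux_left a c ha h0a (h1 h0a)
        have hy : (q * c) * star b = 0 := by
          rw [mul_assoc, h2 h0b, mul_zero]
        obtain ⟨q', hq'⟩ := aux_right b (q * c) hb h0b hy
        exact ⟨(q * c) * q', by rw [mul_assoc, hq', hq]⟩
      · -- only a singular; b invertible
        set d : ℍ[F] := c * ((Quaternion.normSq b)⁻¹ • star b) with hd
        have hsd : star a * d = 0 := by
          rw [hd, ← mul_assoc, h1 h0a, zero_mul]
        obtain ⟨q, hq⟩ := aux_left a d ha h0a hsd
        refine ⟨q * d, ?_⟩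
        rw [hq, hd, mul_assoc, smul_mul_assoc, Quaternion.star_mul_self,
          Quaternion.smul_coe, inv_mul_cancel₀ h0b, Quaternion.coe_one, mul_one]
    · by_cases h0a : Quaternion.normSq a = 0
      · obtain ⟨q, hq⟩ := aux_left a c ha h0a (h1 h0a)
        have hy : (q * c) * star b = 0 := by
          rw [mul_assoc, h2 h0b, mul_zero]
        obtain ⟨q', hq'⟩ := aux_right b (q * c) hb h0b hy
        exact ⟨(q * c) * q', by rw [mul_assoc, hq', hq]⟩
      · -- only b singular; a invertible
        set d : ℍ[F] := ((Quaternion.normSq a)⁻¹ • star a) * c with hd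
        have hsd : d * star b = 0 := by
          rw [hd, mul_assoc, h2 h0b, mul_zero]
        obtain ⟨q, hq⟩ := aux_right b d hb h0b hsd
        refine ⟨d * q, ?_⟩
        rw [mul_assoc, hq, hd, ← mul_assoc, mul_smul_comm, Quaternion.self_mul_star,
          Quaternion.smul_coe, inv_mul_cancel₀ h0a, Quaternion.coe_one, one_mul]
end

section
/- Let F be a field and f, g ∈ ℍ[F]. For every λ ∈ F, the determinant of the F-linear endomorphism S_{f,g} − λ·id of ℍ[F] (where S_{f,g}(χ) = f * χ + χ * g) equals (re f + re g − λ)² · [(re f + re g − λ)² + 2 (normSq (im f) + normSq (im g))] + (normSq (im f) − normSq (im g))². In particular, S_{f,g} is bijective if and only if (re f + re g)² · [(re f + re g)² + 2 (normSq (im f) + normSq (im g))] + (normSq (im f) − normSq (im g))² ≠ 0. -/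
open Quaternion

private lemma det_fin_four' {R : Type*} [CommRing R] (A : Matrix (Fin 4) (Fin 4) R) :
    A.det =
      A 0 0 * (A 1 1 * (A 2 2 * A 3 3 - A 2 3 * A 3 2) -
          A 1 2 * (A 2 1 * A 3 3 - A 2 3 * A 3 1) +
          A 1 3 * (A 2 1 * A 3 2 - A 2 2 * A 3 1)) -
      A 0 1 * (A 1 0 * (A 2 2 * A 3 3 - A 2 3 * A 3 2) -
          A 1 2 * (A 2 0 * A 3 3 - A 2 3 * A 3 0) +
          A 1 3 * (A 2 0 * A 3 2 - A 2 2 * A 3 0)) +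
      A 0 2 * (A 1 0 * (A 2 1 * A 3 3 - A 2 3 * A 3 1) -
          A 1 1 * (A 2 0 * A 3 3 - A 2 3 * A 3 0) +
          A 1 3 * (A 2 0 * A 3 1 - A 2 1 * A 3 0)) -
      A 0 3 * (A 1 0 * (A 2 1 * A 3 2 - A 2 2 * A 3 1) -
          A 1 1 * (A 2 0 * A 3 2 - A 2 2 * A 3 0) +
          A 1 2 * (A 2 0 * A 3 1 - A 2 1 * A 3 0)) := by
  simp [Matrix.det_succ_row_zero, Fin.sum_univ_succ, Fin.succAbove]
  ring

set_option maxHeartbeats 1000000 in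
private lemma key_aux (F : Type*) [Field F] (f g : ℍ[F,-1,-1]) (lam : F) :
    LinearMap.det
        (LinearMap.mulLeft F f + LinearMap.mulRight F g - lam • LinearMap.id) =
      (f.re + g.re - lam) ^ 2 *
          ((f.re + g.re - lam) ^ 2 +
            2 * ((f.imI ^ 2 + f.imJ ^ 2 + f.imK ^ 2) +
                 (g.imI ^ 2 + g.imJ ^ 2 + g.imK ^ 2))) +
        ((f.imI ^ 2 + f.imJ ^ 2 + f.imK ^ 2) -
         (g.imI ^ 2 + g.imJ ^ 2 + g.imK ^ 2)) ^ 2 := by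
  set b := QuaternionAlgebra.basisOneIJK (-1 : F) 0 (-1) with hb
  rw [← LinearMap.det_toMatrix b]
  have hM : LinearMap.toMatrix b b
      (LinearMap.mulLeft F f + LinearMap.mulRight F g - lam • LinearMap.id) =
      !![f.re + g.re - lam, -(f.imI + g.imI), -(f.imJ + g.imJ), -(f.imK + g.imK);
         f.imI + g.imI, f.re + g.re - lam, -f.imK + g.imK, f.imJ - g.imJ;
         f.imJ + g.imJ, f.imK - g.imK, f.re + g.re - lam, -f.imI + g.imI;
         f.imK + g.imK, -f.imJ + g.imJ, f.imI - g.imI, f.re + g.re - lam] := by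
    ext i j
    fin_cases i <;> fin_cases j <;>
      · simp [LinearMap.toMatrix_apply, hb, QuaternionAlgebra.basisOneIJK,
          Module.Basis.coe_ofEquivFun, QuaternionAlgebra.equivTuple, Function.update,
          LinearMap.sub_apply, LinearMap.add_apply, LinearMap.smul_apply,
          LinearMap.mulLeft_apply, LinearMap.mulRight_apply, LinearMap.id_apply,
          QuaternionAlgebra.re_mul, QuaternionAlgebra.imI_mul,
          QuaternionAlgebra.imJ_mul, QuaternionAlgebra.imK_mul]
        try ring
  rw [hM, det_fin_four']
  norm_num [Matrix.cons_val_zero, Matrix.cons_val_one, Matrix.cons_val_two, Matrix.cons_val_three]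
  ring

theorem det_sylvester_sub_smul_id (F : Type*) [Field F] (f g : ℍ[F]) :
    (∀ lam : F,
      LinearMap.det
        (LinearMap.mulLeft F f + LinearMap.mulRight F g - lam • LinearMap.id) =
      (f.re + g.re - lam) ^ 2 *
          ((f.re + g.re - lam) ^ 2 +
            2 * (Quaternion.normSq f.im + Quaternion.normSq g.im)) +
        (Quaternion.normSq f.im - Quaternion.normSq g.im) ^ 2) ∧
    (Function.Bijective (fun χ : ℍ[F] => f * χ + χ * g) ↔
      (f.re + g.re) ^ 2 *
          ((f.re + g.re) ^ 2 +
            2 * (Quaternion.normSq f.im + Quaternion.normSq g.im)) +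
        (Quaternion.normSq f.im - Quaternion.normSq g.im) ^ 2 ≠ 0) := by
  have key : ∀ lam : F,
      LinearMap.det
        (LinearMap.mulLeft F f + LinearMap.mulRight F g - lam • LinearMap.id) =
      (f.re + g.re - lam) ^ 2 *
          ((f.re + g.re - lam) ^ 2 +
            2 * (Quaternion.normSq f.im + Quaternion.normSq g.im)) +
        (Quaternion.normSq f.im - Quaternion.normSq g.im) ^ 2 := by
    intro lam
    rw [show (Quaternion.normSq f.im : F) = f.imI ^ 2 + f.imJ ^ 2 + f.imK ^ 2 by
        simp [Quaternion.normSq_def'],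
      show (Quaternion.normSq g.im : F) = g.imI ^ 2 + g.imJ ^ 2 + g.imK ^ 2 by
        simp [Quaternion.normSq_def']]
    exact key_aux F f g lam
  refine ⟨key, ?_⟩
  have heq : (fun χ : ℍ[F] => f * χ + χ * g) =
      ⇑(LinearMap.mulLeft F f + LinearMap.mulRight F g) := by
    funext χ; simp
  have h0 := key 0
  rw [sub_zero, zero_smul, sub_zero] at h0
  rw [heq]
  constructor
  · intro hbij hzero
    have : IsUnit (LinearMap.det (LinearMap.mulLeft F f + LinearMap.mulRight F g)) :=
      LinearMap.isUnit_det _ ((Module.End.isUnit_iff _).mpr hbij)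
    rw [h0] at this
    exact this.ne_zero hzero
  · intro hne
    have hd : LinearMap.det (LinearMap.mulLeft F f + LinearMap.mulRight F g) ≠ 0 := by
      rw [h0]; exact hne
    exact (LinearMap.equivOfDetNeZero _ hd).bijective
end

section
/- Let F be a field of characteristic zero and f, g ∈ ℍ[F] with im f ≠ 0 and im g ≠ 0. Then the Sylvester operator S_{f,g} has rank strictly greater than 1; equivalently, the kernel of S_{f,g} has F-dimension at most 2. -/
open Quaternion

theorem sylvester_rank_gt_one (F : Type*) [Field F] [CharZero F] (f g : ℍ[F])
    (hf : f.im ≠ 0) (hg : g.im ≠ 0) :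
    1 < Module.finrank F
        (LinearMap.range (LinearMap.mulLeft F f + LinearMap.mulRight F g)) ∧
    Module.finrank F
        (LinearMap.ker (LinearMap.mulLeft F f + LinearMap.mulRight F g)) ≤ 2 := by
  set S := LinearMap.mulLeft F f + LinearMap.mulRight F g with hSdef
  have hrank : 1 < Module.finrank F (LinearMap.range S) := by
    by_contra hcon
    push_neg at hcon
    rw [finrank_le_one_iff] at hcon
    obtain ⟨v₀, hv₀⟩ := hcon
    set e : ℍ[F] := (v₀ : ℍ[F]) with he
    have key : ∀ x : ℍ[F], ∃ c : F, S x = c • e := by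
      intro x
      obtain ⟨c, hc⟩ := hv₀ ⟨S x, LinearMap.mem_range_self S x⟩
      exact ⟨c, by simpa using congrArg Subtype.val hc.symm⟩
    obtain ⟨c0, hc0⟩ := key 1
    obtain ⟨c1, hc1⟩ := key (@id ℍ[F] ⟨0,1,0,0⟩)
    obtain ⟨c2, hc2⟩ := key (@id ℍ[F] ⟨0,0,1,0⟩)
    obtain ⟨c3, hc3⟩ := key (@id ℍ[F] ⟨0,0,0,1⟩)
    simp only [hSdef, LinearMap.add_apply, LinearMap.mulLeft_apply,
      LinearMap.mulRight_apply, mul_one, one_mul] at hc0 hc1 hc2 hc3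
    have t0r := congrArg QuaternionAlgebra.re hc0
    have t0i := congrArg QuaternionAlgebra.imI hc0
    have t0j := congrArg QuaternionAlgebra.imJ hc0
    have t0k := congrArg QuaternionAlgebra.imK hc0
    have t1r := congrArg QuaternionAlgebra.re hc1
    have t1i := congrArg QuaternionAlgebra.imI hc1
    have t1j := congrArg QuaternionAlgebra.imJ hc1
    have t1k := congrArg QuaternionAlgebra.imK hc1
    have t2r := congrArg QuaternionAlgebra.re hc2
    have t2i := congrArg QuaternionAlgebra.imI hc2
    have t2j := congrArg QuaternionAlgebra.imJ hc2
    have t2k := congrArg QuaternionAlgebra.imK hc2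
    have t3r := congrArg QuaternionAlgebra.re hc3
    have t3i := congrArg QuaternionAlgebra.imI hc3
    have t3j := congrArg QuaternionAlgebra.imJ hc3
    have t3k := congrArg QuaternionAlgebra.imK hc3
    simp only [Quaternion.re_add, Quaternion.imI_add, Quaternion.imJ_add,
      Quaternion.imK_add, Quaternion.re_mul, Quaternion.imI_mul, Quaternion.imJ_mul,
      Quaternion.imK_mul, Quaternion.re_smul, Quaternion.imI_smul, Quaternion.imJ_smul,
      Quaternion.imK_smul, smul_eq_mul, LinearMap.add_apply, LinearMap.mulLeft_apply,
      LinearMap.mulRight_apply] at t0r t0i t0j t0k t1r t1i t1j t1k t2r t2i t2j t2k t3r t3i t3j t3k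
    dsimp only [id] at t1r t1i t1j t1k t2r t2i t2j t2k t3r t3i t3j t3k
    have e0r : f.re + g.re = c0 * e.re := by linear_combination t0r
    have e0i : f.imI + g.imI = c0 * e.imI := by linear_combination t0i
    have e0j : f.imJ + g.imJ = c0 * e.imJ := by linear_combination t0j
    have e0k : f.imK + g.imK = c0 * e.imK := by linear_combination t0k
    have e1r : -(f.imI + g.imI) = c1 * e.re := by linear_combination t1r
    have e1i : f.re + g.re = c1 * e.imI := by linear_combination t1i
    have e1j : f.imK - g.imK = c1 * e.imJ := by linear_combination t1j
    have e1k : -(f.imJ - g.imJ) = c1 * e.imK := by linear_combination t1k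
    have e2r : -(f.imJ + g.imJ) = c2 * e.re := by linear_combination t2r
    have e2i : -(f.imK - g.imK) = c2 * e.imI := by linear_combination t2i
    have e2j : f.re + g.re = c2 * e.imJ := by linear_combination t2j
    have e2k : f.imI - g.imI = c2 * e.imK := by linear_combination t2k
    have e3r : -(f.imK + g.imK) = c3 * e.re := by linear_combination t3r
    have e3i : f.imJ - g.imJ = c3 * e.imI := by linear_combination t3i
    have e3j : -(f.imI - g.imI) = c3 * e.imJ := by linear_combination t3j
    have e3k : f.re + g.re = c3 * e.imK := by linear_combination t3k
    -- abbreviations (purely for readability below): s := re f + re g, pᵢ, dᵢ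
    have A1 : (f.re + g.re)^2 + (f.imI + g.imI)^2 = 0 := by
      linear_combination (f.re + g.re) * e0r + (c0 * e.re) * e1i
        - (f.imI + g.imI) * e1r - (c1 * e.re) * e0i
    have A2 : (f.re + g.re)^2 + (f.imJ + g.imJ)^2 = 0 := by
      linear_combination (f.re + g.re) * e0r + (c0 * e.re) * e2j
        - (f.imJ + g.imJ) * e2r - (c2 * e.re) * e0j
    have A3 : (f.re + g.re)^2 + (f.imK + g.imK)^2 = 0 := by
      linear_combination (f.re + g.re) * e0r + (c0 * e.re) * e3k
        - (f.imK + g.imK) * e3r - (c3 * e.re) * e0k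
    have B1 : (f.re + g.re)^2 + (f.imI - g.imI)^2 = 0 := by
      linear_combination (f.re + g.re) * e2j + (c2 * e.imJ) * e3k
        - (f.imI - g.imI) * e3j - (c3 * e.imJ) * e2k
    have B2 : (f.re + g.re)^2 + (f.imJ - g.imJ)^2 = 0 := by
      linear_combination (f.re + g.re) * e1i + (c1 * e.imI) * e3k
        + (f.imJ - g.imJ) * e3i - (c3 * e.imI) * e1k
    have B3 : (f.re + g.re)^2 + (f.imK - g.imK)^2 = 0 := by
      linear_combination (f.re + g.re) * e1i + (c1 * e.imI) * e2j
        - (f.imK - g.imK) * e2i - (c2 * e.imI) * e1j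
    have C : (f.imJ + g.imJ) * (f.imJ - g.imJ) + (f.imK + g.imK) * (f.imK - g.imK) = 0 := by
      linear_combination -(f.imJ - g.imJ) * e2r - (c2 * e.re) * e3i
        - (f.imK - g.imK) * e3r + (c3 * e.re) * e2i
    have D : (f.imI + g.imI) * (f.imI - g.imI) + (f.imK + g.imK) * (f.imK - g.imK) = 0 := by
      linear_combination -(f.imI - g.imI) * e1r + (c1 * e.re) * e3j
        - (f.imK - g.imK) * e3r - (c3 * e.re) * e1j
    have E : (f.imI + g.imI) * (f.imI - g.imI) + (f.imJ + g.imJ) * (f.imJ - g.imJ) = 0 := by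
      linear_combination -(f.imI - g.imI) * e1r - (c1 * e.re) * e2k
        - (f.imJ - g.imJ) * e2r + (c2 * e.re) * e1k
    have hpd1 : (f.imI + g.imI) * (f.imI - g.imI) = 0 := by
      linear_combination (1/2 : F) * D + (1/2 : F) * E - (1/2 : F) * C
    have hs4 : (f.re + g.re)^4 = 0 := by
      linear_combination ((f.re + g.re)^2) * B1 - ((f.imI - g.imI)^2) * A1
        + ((f.imI + g.imI) * (f.imI - g.imI)) * hpd1
    have hs : f.re + g.re = 0 :=
      pow_eq_zero_iff (by norm_num : (4 : ℕ) ≠ 0) |>.mp hs4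
    have hsq : ∀ x : F, (f.re + g.re)^2 + x^2 = 0 → x = 0 := by
      intro x hx
      have : x^2 = 0 := by linear_combination hx - (f.re + g.re) * hs
      exact pow_eq_zero_iff two_ne_zero |>.mp this
    have hp1 := hsq _ A1
    have hp2 := hsq _ A2
    have hp3 := hsq _ A3
    have hd1 := hsq _ B1
    have hd2 := hsq _ B2
    have hd3 := hsq _ B3
    have hfi : f.imI = 0 := by linear_combination (1/2 : F) * hp1 + (1/2 : F) * hd1
    have hfj : f.imJ = 0 := by linear_combination (1/2 : F) * hp2 + (1/2 : F) * hd2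
    have hfk : f.imK = 0 := by linear_combination (1/2 : F) * hp3 + (1/2 : F) * hd3
    exact hf (by ext <;> simp [hfi, hfj, hfk])
  refine ⟨hrank, ?_⟩
  have h4 : Module.finrank F ℍ[F] = 4 := Quaternion.finrank_eq_four
  have hrn := LinearMap.finrank_range_add_finrank_ker S
  omega
end

section
/- Let F be a field of characteristic zero such that the quaternion norm form on ℍ[F] is anisotropic, i.e. normSq q = 0 implies q = 0 (the algebraic counterpart of Ω being a slice domain, where ℍ[F] is a division algebra). Then for all f, g ∈ ℍ[F]: there exists a nonzero h ∈ ℍ[F] with h * f = g * h (i.e. f ≃ g) if and only if re f = re g and normSq f = normSq g. -/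
open Quaternion

private lemma quat_re_mul_comm {F : Type*} [Field F] (a b : ℍ[F]) :
    (a * b).re = (b * a).re := by
  simp only [Quaternion.re_mul]; ring

private def qmk {F : Type*} [Field F] (a b c d : F) : ℍ[F] := ⟨a, b, c, d⟩

@[simp] private lemma qmk_re {F : Type*} [Field F] (a b c d : F) : (qmk a b c d).re = a := rfl
@[simp] private lemma qmk_imI {F : Type*} [Field F] (a b c d : F) : (qmk a b c d).imI = b := rfl
@[simp] private lemma qmk_imJ {F : Type*} [Field F] (a b c d : F) : (qmk a b c d).imJ = c := rfl
@[simp] private lemma qmk_imK {F : Type*} [Field F] (a b c d : F) : (qmk a b c d).imK = d := rfl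

theorem equiv_iff_same_re_normSq_of_anisotropic (F : Type*) [Field F] [CharZero F]
    (haniso : ∀ q : ℍ[F], Quaternion.normSq q = 0 → q = 0) (f g : ℍ[F]) :
    (∃ h : ℍ[F], h ≠ 0 ∧ h * f = g * h) ↔
      (f.re = g.re ∧ Quaternion.normSq f = Quaternion.normSq g) := by
  constructor
  · rintro ⟨h, hne, heq⟩
    have hns : normSq h ≠ 0 := fun h0 => hne (haniso h h0)
    constructor
    · have e1 : (h * f * star h).re = (g * (h * star h)).re := by
        rw [← mul_assoc, heq]
      rw [self_mul_star] at e1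
      rw [quat_re_mul_comm, ← mul_assoc, star_mul_self] at e1
      simp [Quaternion.coe_mul_eq_smul, Quaternion.mul_coe_eq_smul] at e1
      exact (mul_left_cancel₀ hns (by simpa using e1))
    · have := congrArg normSq heq
      rw [map_mul, map_mul] at this
      rw [mul_comm (normSq g)] at this
      exact mul_left_cancel₀ hns this
  · rintro ⟨hre, hns⟩
    rw [normSq_def', normSq_def', hre] at hns
    have hsum : f.imI^2 + f.imJ^2 + f.imK^2 = g.imI^2 + g.imJ^2 + g.imK^2 := by
      linear_combination hns
    by_cases hA : f.imI + g.imI = 0 ∧ f.imJ + g.imJ = 0 ∧ f.imK + g.imK = 0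
    · obtain ⟨h1, h2, h3⟩ := hA
      have g1 : g.imI = -f.imI := by linear_combination h1
      have g2 : g.imJ = -f.imJ := by linear_combination h2
      have g3 : g.imK = -f.imK := by linear_combination h3
      by_cases hB : f.imI = 0 ∧ f.imJ = 0
      · obtain ⟨b1, b2⟩ := hB
        by_cases hC : f.imK = 0
        · refine ⟨1, one_ne_zero, ?_⟩
          have : f = g := by
            ext <;> simp [hre, g1, g2, g3, b1, b2, hC]
          rw [this, one_mul, mul_one]
        · refine ⟨qmk 0 1 0 0, ?_, ?_⟩
          · intro h0
            simpa using congrArg QuaternionAlgebra.imI h0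
          · ext <;> simp only [Quaternion.re_mul, Quaternion.imI_mul, Quaternion.imJ_mul,
              Quaternion.imK_mul, qmk_re, qmk_imI, qmk_imJ, qmk_imK, hre, g1, g2, g3, b1, b2] <;> ring
      · refine ⟨qmk 0 (-f.imJ) f.imI 0, ?_, ?_⟩
        · intro h0
          exact hB ⟨by simpa using congrArg QuaternionAlgebra.imJ h0,
            by simpa using congrArg QuaternionAlgebra.imI h0⟩
        · ext <;> simp only [Quaternion.re_mul, Quaternion.imI_mul, Quaternion.imJ_mul,
            Quaternion.imK_mul, qmk_re, qmk_imI, qmk_imJ, qmk_imK, hre, g1, g2, g3] <;> ring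
    · refine ⟨qmk 0 (f.imI + g.imI) (f.imJ + g.imJ) (f.imK + g.imK), ?_, ?_⟩
      · intro h0
        exact hA ⟨by simpa using congrArg QuaternionAlgebra.imI h0,
          by simpa using congrArg QuaternionAlgebra.imJ h0,
          by simpa using congrArg QuaternionAlgebra.imK h0⟩
      · ext <;> simp only [Quaternion.re_mul, Quaternion.imI_mul, Quaternion.imJ_mul,
          Quaternion.imK_mul, qmk_re, qmk_imI, qmk_imJ, qmk_imK, hre] <;>
          first
            | ring1
            | linear_combination hsum
            | linear_combination -hsum
end

section
/- Let F be a field of characteristic zero and f, g ∈ ℍ[F] with im f ≠ 0, im g ≠ 0 and re f + re g = 0. Then the kernel of the Sylvester operator S_{f,g} has F-dimension 2 if and only if normSq (im f) = normSq (im g); and if normSq (im f) ≠ normSq (im g), then S_{f,g} is bijective. -/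
open Quaternion

lemma quat_comm_mem_span {F : Type*} [Field F] [CharZero F] (f y : ℍ[F]) (hf : f.im ≠ 0)
    (h : y * f = f * y) : y ∈ Submodule.span F ({1, f} : Set ℍ[F]) := by
  have h2 : (2 : F) ≠ 0 := two_ne_zero
  have hc : f.imI ≠ 0 ∨ f.imJ ≠ 0 ∨ f.imK ≠ 0 := by
    by_contra hcon
    push_neg at hcon
    exact hf (by ext <;> simp [hcon.1, hcon.2.1, hcon.2.2])
  rw [Quaternion.ext_iff] at h
  obtain ⟨e0, e1, e2, e3⟩ := h
  simp only [Quaternion.re_mul, Quaternion.imI_mul, Quaternion.imJ_mul,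
    Quaternion.imK_mul] at e1 e2 e3
  have c1 : y.imJ * f.imK - y.imK * f.imJ = 0 := by
    apply mul_left_cancel₀ h2; linear_combination e1
  have c2 : y.imK * f.imI - y.imI * f.imK = 0 := by
    apply mul_left_cancel₀ h2; linear_combination e2
  have c3 : y.imI * f.imJ - y.imJ * f.imI = 0 := by
    apply mul_left_cancel₀ h2; linear_combination e3
  rw [Submodule.mem_span_pair]
  rcases hc with ha | ha | ha
  · refine ⟨y.re - (y.imI / f.imI) * f.re, y.imI / f.imI, ?_⟩
    ext <;> simp <;> field_simp
    · linear_combination c3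
    · linear_combination -c2
  · refine ⟨y.re - (y.imJ / f.imJ) * f.re, y.imJ / f.imJ, ?_⟩
    ext <;> simp <;> field_simp
    · linear_combination -c3
    · linear_combination c1
  · refine ⟨y.re - (y.imK / f.imK) * f.re, y.imK / f.imK, ?_⟩
    ext <;> simp <;> field_simp
    · linear_combination c2
    · linear_combination -c1

lemma quat_isotropic_finrank_le_two {F : Type*} [Field F] [CharZero F] (W : Submodule F ℍ[F])
    (h : ∀ x ∈ W, normSq x = 0) : Module.finrank F W ≤ 2 := by
  set B : LinearMap.BilinForm F ℍ[F] := LinearMap.mk₂ F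
    (fun x y => x.re * y.re + x.imI * y.imI + x.imJ * y.imJ + x.imK * y.imK)
    (by intros; simp; ring) (by intros; simp [smul_eq_mul]; ring)
    (by intros; simp; ring) (by intros; simp [smul_eq_mul]; ring) with hB
  have hBapp : ∀ x y : ℍ[F], B x y = x.re * y.re + x.imI * y.imI + x.imJ * y.imJ + x.imK * y.imK :=
    fun x y => rfl
  have hsymm : ∀ x y, B x y = B y x := by intro x y; rw [hBapp, hBapp]; ring
  have hrefl : B.IsRefl := fun x y hxy => by rw [hsymm]; exact hxy
  have hnd : B.Nondegenerate := by
    suffices hsl : LinearMap.SeparatingLeft B from ⟨hsl, fun y hy => hsl y (fun x => by rw [hsymm]; exact hy x)⟩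
    intro x hx
    have k1 := hx (⟨1, 0, 0, 0⟩ : ℍ[F])
    have k2 := hx (⟨0, 1, 0, 0⟩ : ℍ[F])
    have k3 := hx (⟨0, 0, 1, 0⟩ : ℍ[F])
    have k4 := hx (⟨0, 0, 0, 1⟩ : ℍ[F])
    erw [hBapp] at k1 k2 k3 k4
    simp at k1 k2 k3 k4
    ext <;> simp [k1, k2, k3, k4]
  have hWle : W ≤ B.orthogonal W := by
    intro x hx
    rw [LinearMap.BilinForm.mem_orthogonal_iff]
    intro y hy
    have hx' := h x hx
    have hy' := h y hy
    have hxy' := h (x + y) (W.add_mem hx hy)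
    rw [Quaternion.normSq_def'] at hx' hy' hxy'
    simp only [Quaternion.re_add, Quaternion.imI_add, Quaternion.imJ_add,
      Quaternion.imK_add] at hxy'
    show B y x = 0
    apply mul_left_cancel₀ (two_ne_zero (α := F))
    rw [hBapp]
    linear_combination hxy' - hx' - hy'
  have h4 : Module.finrank F ℍ[F] = 4 := Quaternion.finrank_eq_four
  have := Submodule.finrank_mono hWle
  rw [LinearMap.BilinForm.finrank_orthogonal hnd W, h4] at this
  omega

lemma sylv_ker_le_two {F : Type*} [Field F] [CharZero F] (f g : ℍ[F]) (hf : f.im ≠ 0) :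
    Module.finrank F
      (LinearMap.ker (LinearMap.mulLeft F f + LinearMap.mulRight F g)) ≤ 2 := by
  classical
  set K := LinearMap.ker (LinearMap.mulLeft F f + LinearMap.mulRight F g) with hK
  have hmemK : ∀ χ, χ ∈ K ↔ f * χ + χ * g = 0 := by
    intro χ
    rw [hK, LinearMap.mem_ker, LinearMap.add_apply, LinearMap.mulLeft_apply,
      LinearMap.mulRight_apply]
  by_cases hiso : ∀ x ∈ K, normSq x = 0
  · exact quat_isotropic_finrank_le_two K hiso
  push_neg at hiso
  obtain ⟨χ₀, hχ₀K, hχ₀⟩ := hiso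
  set e : ℍ[F] := (normSq χ₀)⁻¹ • star χ₀ with he
  have hχe : χ₀ * e = 1 := by
    rw [he, Algebra.mul_smul_comm, Quaternion.self_mul_star, Quaternion.smul_coe,
      inv_mul_cancel₀ hχ₀, Quaternion.coe_one]
  have heχ : e * χ₀ = 1 := by
    rw [he, Algebra.smul_mul_assoc, Quaternion.star_mul_self, Quaternion.smul_coe,
      inv_mul_cancel₀ hχ₀, Quaternion.coe_one]
  have hgeq : g = -(e * (f * χ₀)) := by
    have h0 : f * χ₀ + χ₀ * g = 0 := (hmemK χ₀).mp hχ₀K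
    have h1 : χ₀ * g = -(f * χ₀) := eq_neg_of_add_eq_zero_right h0
    calc g = (e * χ₀) * g := by rw [heχ, one_mul]
    _ = e * (χ₀ * g) := by rw [mul_assoc]
    _ = -(e * (f * χ₀)) := by rw [h1, mul_neg]
  have hcomm : ∀ χ ∈ K, (χ * e) * f = f * (χ * e) := by
    intro χ hχ
    have h0 : f * χ + χ * g = 0 := (hmemK χ).mp hχ
    have h1 : f * χ = χ * (e * (f * χ₀)) := by
      have h2 : f * χ = -(χ * g) := eq_neg_of_add_eq_zero_left h0
      rw [h2, hgeq, mul_neg, neg_neg]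
    symm
    calc f * (χ * e) = (f * χ) * e := by rw [mul_assoc]
    _ = (χ * (e * (f * χ₀))) * e := by rw [h1]
    _ = ((χ * e) * f) * (χ₀ * e) := by simp only [mul_assoc]
    _ = (χ * e) * f := by rw [hχe, mul_one]
  set Sp := Submodule.span F ({1, f} : Set ℍ[F]) with hSp
  have hmem : ∀ χ : K, (χ : ℍ[F]) * e ∈ Sp :=
    fun χ => quat_comm_mem_span f _ hf (hcomm χ χ.2)
  set ψ : K →ₗ[F] Sp :=
    LinearMap.codRestrict Sp ((LinearMap.mulRight F e).comp K.subtype) hmem with hψ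
  have hinj : Function.Injective ψ := by
    rw [← LinearMap.ker_eq_bot, LinearMap.ker_eq_bot']
    intro χ hχ0
    have hz : (χ : ℍ[F]) * e = 0 := congrArg Subtype.val hχ0
    have : (χ : ℍ[F]) = 0 := by
      calc (χ : ℍ[F]) = χ * (e * χ₀) := by rw [heχ, mul_one]
      _ = ((χ : ℍ[F]) * e) * χ₀ := by rw [mul_assoc]
      _ = 0 := by rw [hz, zero_mul]
    exact Subtype.ext this
  have hsp2 : Module.finrank F Sp ≤ 2 := by
    refine (finrank_span_le_card _).trans ?_
    have : ({1, f} : Set ℍ[F]).toFinset ⊆ {1, f} := by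
      intro x hx
      simpa using hx
    exact (Finset.card_le_card this).trans ((Finset.card_insert_le _ _).trans (by simp))
  exact (LinearMap.finrank_le_finrank_of_injective hinj).trans hsp2

theorem sylvester_rank_two_iff (F : Type*) [Field F] [CharZero F] (f g : ℍ[F])
    (hf : f.im ≠ 0) (hg : g.im ≠ 0) (hre : f.re + g.re = 0) :
    (Module.finrank F
        (LinearMap.ker (LinearMap.mulLeft F f + LinearMap.mulRight F g)) = 2 ↔
      Quaternion.normSq f.im = Quaternion.normSq g.im) ∧
    (Quaternion.normSq f.im ≠ Quaternion.normSq g.im →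
      Function.Bijective (fun χ : ℍ[F] => f * χ + χ * g)) := by
  classical
  have hre' : g.re = -f.re := eq_neg_of_add_eq_zero_right hre
  set c : F := normSq g.im - normSq f.im with hc
  have key1 : ∀ χ : ℍ[F], f * (f * χ + χ * g) + (f * χ + χ * g) * star g = c • χ := by
    intro χ
    ext <;>
      simp only [hc, Quaternion.re_add, Quaternion.imI_add, Quaternion.imJ_add,
        Quaternion.imK_add, Quaternion.re_mul, Quaternion.imI_mul, Quaternion.imJ_mul,
        Quaternion.imK_mul, Quaternion.re_star, Quaternion.imI_star, Quaternion.imJ_star,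
        Quaternion.imK_star, Quaternion.re_smul, Quaternion.imI_smul, Quaternion.imJ_smul,
        Quaternion.imK_smul, Quaternion.normSq_def', Quaternion.re_im, Quaternion.imI_im,
        Quaternion.imJ_im, Quaternion.imK_im, smul_eq_mul, hre'] <;>
      ring
  have key2 : ∀ χ : ℍ[F], f * (f * χ + χ * star g) + (f * χ + χ * star g) * g = c • χ := by
    intro χ
    ext <;>
      simp only [hc, Quaternion.re_add, Quaternion.imI_add, Quaternion.imJ_add,
        Quaternion.imK_add, Quaternion.re_mul, Quaternion.imI_mul, Quaternion.imJ_mul,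
        Quaternion.imK_mul, Quaternion.re_star, Quaternion.imI_star, Quaternion.imJ_star,
        Quaternion.imK_star, Quaternion.re_smul, Quaternion.imI_smul, Quaternion.imJ_smul,
        Quaternion.imK_smul, Quaternion.normSq_def', Quaternion.re_im, Quaternion.imI_im,
        Quaternion.imJ_im, Quaternion.imK_im, smul_eq_mul, hre'] <;>
      ring
  have hSapp : ∀ χ : ℍ[F], (LinearMap.mulLeft F f + LinearMap.mulRight F g) χ = f * χ + χ * g :=
    fun χ => by rw [LinearMap.add_apply, LinearMap.mulLeft_apply, LinearMap.mulRight_apply]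
  constructor
  · constructor
    · intro h2
      by_contra hne
      have hc0 : c ≠ 0 := sub_ne_zero.mpr (Ne.symm hne)
      have hker : LinearMap.ker (LinearMap.mulLeft F f + LinearMap.mulRight F g) = ⊥ := by
        rw [LinearMap.ker_eq_bot']
        intro χ hχ
        rw [hSapp] at hχ
        have hz : c • χ = 0 := by rw [← key1 χ, hχ]; simp
        exact ((smul_eq_zero.mp hz).resolve_left hc0)
      rw [hker] at h2
      simp at h2
    · intro heq
      have hc0 : c = 0 := by rw [hc, heq, sub_self]
      set T := LinearMap.mulLeft F f + LinearMap.mulRight F (star g) with hT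
      have hTapp : ∀ χ : ℍ[F], T χ = f * χ + χ * star g :=
        fun χ => by rw [hT, LinearMap.add_apply, LinearMap.mulLeft_apply,
          LinearMap.mulRight_apply]
      have hrange : LinearMap.range T ≤
          LinearMap.ker (LinearMap.mulLeft F f + LinearMap.mulRight F g) := by
        rintro x ⟨χ, rfl⟩
        rw [LinearMap.mem_ker, hSapp, hTapp]
        have := key2 χ
        rw [hc0, zero_smul] at this
        exact this
      have hkS := sylv_ker_le_two f g hf
      have hkT := sylv_ker_le_two f (star g) hf
      have hrn := LinearMap.finrank_range_add_finrank_ker T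
      rw [Quaternion.finrank_eq_four] at hrn
      have hge := Submodule.finrank_mono hrange
      rw [← hT] at hkT
      omega
  · intro hne
    have hc0 : c ≠ 0 := sub_ne_zero.mpr (Ne.symm hne)
    rw [Function.bijective_iff_has_inverse]
    refine ⟨fun χ => c⁻¹ • (f * χ + χ * star g), fun χ => ?_, fun χ => ?_⟩
    · simp only
      rw [key1 χ, smul_smul, inv_mul_cancel₀ hc0, one_smul]
    · simp only
      rw [Algebra.mul_smul_comm, Algebra.smul_mul_assoc, ← smul_add, key2 χ, smul_smul,
        inv_mul_cancel₀ hc0, one_smul]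
end

section
/- Let F be a field of characteristic zero and f, g ∈ ℍ[F] with im f ≠ 0 and im g ≠ 0, and suppose the Sylvester operator S_{f,g} is not bijective. Then re f + re g ≠ 0 if and only if S_{f,g} has rank 3, i.e. the kernel of S_{f,g} has F-dimension exactly 1. -/
open Quaternion

private lemma aux_right_ideal (F : Type*) [Field F] [CharZero F] (w : ℍ[F]) (hw : w ≠ 0)
    (h : ∀ q : ℍ[F], ∃ c : F, w * q = c • w) : False := by
  obtain ⟨c, hc⟩ := h ⟨0,1,0,0⟩
  obtain ⟨d, hd⟩ := h ⟨0,0,1,0⟩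
  have hk : w * ⟨0,0,0,1⟩ = (c*d) • w := by
    have : (⟨0,0,0,1⟩ : ℍ[F]) = (show ℍ[F] from ⟨0,1,0,0⟩) * (show ℍ[F] from ⟨0,0,1,0⟩) := by
      exact (show (⟨0,0,0,1⟩ : ℍ[F]) = ⟨0,1,0,0⟩ * ⟨0,0,1,0⟩ by ext <;> simp)
    rw [this, ← mul_assoc, hc, smul_mul_assoc, hd, smul_smul]
  have hk' : w * ⟨0,0,0,1⟩ = (-(d*c)) • w := by
    have : (⟨0,0,0,1⟩ : ℍ[F]) = -((show ℍ[F] from ⟨0,0,1,0⟩) * (show ℍ[F] from ⟨0,1,0,0⟩)) := by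
      exact (show (⟨0,0,0,1⟩ : ℍ[F]) = -(⟨0,0,1,0⟩ * ⟨0,1,0,0⟩) by ext <;> simp)
    rw [this, mul_neg, ← mul_assoc, hd, smul_mul_assoc, hc, smul_smul, neg_smul]
  have hcd : c * d = 0 := by
    have h1 := hk.symm.trans hk'
    have h2 : (c*d + d*c) • w = 0 := by rw [add_smul]; linear_combination (norm := module) h1
    rcases smul_eq_zero.mp h2 with h | h
    · linear_combination h / 2
    · exact absurd h hw
  have hc2 : c * c = -1 := by
    have hii : (show ℍ[F] from ⟨0,1,0,0⟩) * (show ℍ[F] from ⟨0,1,0,0⟩) = -1 := by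
      exact (show (⟨0,1,0,0⟩ : ℍ[F]) * ⟨0,1,0,0⟩ = -1 by ext <;> simp)
    have hw2 : w * ((show ℍ[F] from ⟨0,1,0,0⟩) * (show ℍ[F] from ⟨0,1,0,0⟩)) = (c*c) • w := by
      rw [← mul_assoc, hc, smul_mul_assoc, hc, smul_smul]
    rw [hii, mul_neg_one] at hw2
    have h2 : (c*c + 1) • w = 0 := by rw [add_smul]; linear_combination (norm := module) -hw2
    rcases smul_eq_zero.mp h2 with h | h
    · linear_combination h
    · exact absurd h hw
  have hd2 : d * d = -1 := by
    have hjj : (show ℍ[F] from ⟨0,0,1,0⟩) * (show ℍ[F] from ⟨0,0,1,0⟩) = -1 := by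
      exact (show (⟨0,0,1,0⟩ : ℍ[F]) * ⟨0,0,1,0⟩ = -1 by ext <;> simp)
    have hw2 : w * ((show ℍ[F] from ⟨0,0,1,0⟩) * (show ℍ[F] from ⟨0,0,1,0⟩)) = (d*d) • w := by
      rw [← mul_assoc, hd, smul_mul_assoc, hd, smul_smul]
    rw [hjj, mul_neg_one] at hw2
    have h2 : (d*d + 1) • w = 0 := by rw [add_smul]; linear_combination (norm := module) -hw2
    rcases smul_eq_zero.mp h2 with h | h
    · linear_combination h
    · exact absurd h hw
  rcases mul_eq_zero.mp hcd with h | h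
  · rw [h, zero_mul] at hc2; exact one_ne_zero (neg_eq_zero.mp hc2.symm)
  · rw [h, mul_zero] at hd2; exact one_ne_zero (neg_eq_zero.mp hd2.symm)

private lemma aux_sandwich (F : Type*) [Field F] [CharZero F] (a b : ℍ[F]) (ha : a ≠ 0)
    (hb : b ≠ 0) : ∃ q : ℍ[F], a * q * b ≠ 0 := by
  by_contra hcon
  push_neg at hcon
  set i : ℍ[F] := ⟨0,1,0,0⟩ with hi
  set j : ℍ[F] := ⟨0,0,1,0⟩ with hj
  set k : ℍ[F] := ⟨0,0,0,1⟩ with hk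
  have t0 : a * b = 0 := by have := hcon 1; rwa [mul_one] at this
  have sandwich : ∀ e : ℍ[F], (e*a*e)*b = 0 := by
    intro e
    rw [mul_assoc e a e, mul_assoc e (a*e) b, hcon e, mul_zero]
  have h1 : (((2*a.re : F) : ℍ[F]) + (2*a.imI) • i) * b = 0 := by
    have e1 : ((2*a.re : F) : ℍ[F]) + (2*a.imI) • i = a - i*a*i := by
      ext <;> simp <;> simp [hi] <;> ring
    rw [e1, sub_mul, t0, sandwich i, sub_zero]
  have h2 : (((2*a.re : F) : ℍ[F]) + (2*a.imJ) • j) * b = 0 := by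
    have e1 : ((2*a.re : F) : ℍ[F]) + (2*a.imJ) • j = a - j*a*j := by
      ext <;> simp <;> simp [hj] <;> ring
    rw [e1, sub_mul, t0, sandwich j, sub_zero]
  have h3 : (((2*a.re : F) : ℍ[F]) + (2*a.imK) • k) * b = 0 := by
    have e1 : ((2*a.re : F) : ℍ[F]) + (2*a.imK) • k = a - k*a*k := by
      ext <;> simp <;> simp [hk] <;> ring
    rw [e1, sub_mul, t0, sandwich k, sub_zero]
  have hre : a.re = 0 := by
    have e4 : ((4*a.re : F) : ℍ[F]) =
        (((2*a.re : F) : ℍ[F]) + (2*a.imI) • i) + (((2*a.re : F) : ℍ[F]) + (2*a.imJ) • j)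
        + (((2*a.re : F) : ℍ[F]) + (2*a.imK) • k) - (2:F) • a := by
      ext <;> simp <;> simp [hi, hj, hk] <;> ring
    have h5 : ((4*a.re : F) : ℍ[F]) * b = 0 := by
      rw [e4, sub_mul, add_mul, add_mul, h1, h2, h3, smul_mul_assoc, t0, smul_zero]
      abel
    rw [coe_mul_eq_smul] at h5
    rcases smul_eq_zero.mp h5 with h | h
    · linear_combination h / 4
    · exact absurd h hb
  have himI : a.imI = 0 := by
    rw [hre] at h1
    simp only [mul_zero, Quaternion.coe_zero, zero_add, smul_mul_assoc] at h1
    rcases smul_eq_zero.mp h1 with h | h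
    · linear_combination h / 2
    · exfalso; apply hb
      have h6 : i * (i * b) = -b := by
        rw [← mul_assoc, show i*i = -1 by ext <;> simp <;> simp [hi], neg_one_mul]
      rw [h, mul_zero] at h6; exact neg_eq_zero.mp h6.symm
  have himJ : a.imJ = 0 := by
    rw [hre] at h2
    simp only [mul_zero, Quaternion.coe_zero, zero_add, smul_mul_assoc] at h2
    rcases smul_eq_zero.mp h2 with h | h
    · linear_combination h / 2
    · exfalso; apply hb
      have h6 : j * (j * b) = -b := by
        rw [← mul_assoc, show j*j = -1 by ext <;> simp <;> simp [hj], neg_one_mul]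
      rw [h, mul_zero] at h6; exact neg_eq_zero.mp h6.symm
  have himK : a.imK = 0 := by
    rw [hre] at h3
    simp only [mul_zero, Quaternion.coe_zero, zero_add, smul_mul_assoc] at h3
    rcases smul_eq_zero.mp h3 with h | h
    · linear_combination h / 2
    · exfalso; apply hb
      have h6 : k * (k * b) = -b := by
        rw [← mul_assoc, show k*k = -1 by ext <;> simp <;> simp [hk], neg_one_mul]
      rw [h, mul_zero] at h6; exact neg_eq_zero.mp h6.symm
  exact ha (by ext <;> simp [hre, himI, himJ, himK])

private lemma aux_ker_mulLeft_le_two (F : Type*) [Field F] [CharZero F] (z : ℍ[F])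
    (hz : z ≠ 0) :
    Module.finrank F (LinearMap.ker (LinearMap.mulLeft F z)) ≤ 2 := by
  have h4 : Module.finrank F ℍ[F] = 4 := Quaternion.finrank_eq_four
  have hrn := LinearMap.finrank_range_add_finrank_ker (LinearMap.mulLeft F z)
  rw [h4] at hrn
  have hzr : z ∈ LinearMap.range (LinearMap.mulLeft F z) :=
    ⟨1, by simp [LinearMap.mulLeft_apply]⟩
  have hpos : 0 < Module.finrank F (LinearMap.range (LinearMap.mulLeft F z)) := by
    rw [Module.finrank_pos_iff_exists_ne_zero]
    exact ⟨⟨z, hzr⟩, by simpa using hz⟩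
  have hne1 : Module.finrank F (LinearMap.range (LinearMap.mulLeft F z)) ≠ 1 := by
    intro h1
    have hsp : Submodule.span F {z} = LinearMap.range (LinearMap.mulLeft F z) := by
      apply Submodule.eq_of_le_of_finrank_le
      · rwa [Submodule.span_singleton_le_iff_mem]
      · rw [h1, finrank_span_singleton hz]
    apply aux_right_ideal F z hz
    intro q
    have hmem : z * q ∈ Submodule.span F {z} := by
      rw [hsp]; exact ⟨q, by simp [LinearMap.mulLeft_apply]⟩
    obtain ⟨c, hc⟩ := Submodule.mem_span_singleton.mp hmem
    exact ⟨c, hc.symm⟩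
  omega

private lemma aux_forward (F : Type*) [Field F] [CharZero F] (f g : ℍ[F])
    (hf : f.im ≠ 0) (hg : g.im ≠ 0)
    (hker : LinearMap.ker (LinearMap.mulLeft F f + LinearMap.mulRight F g) ≠ ⊥)
    (hane : f.re + g.re ≠ 0) :
    Module.finrank F
      (LinearMap.ker (LinearMap.mulLeft F f + LinearMap.mulRight F g)) = 1 := by
  set T : ℍ[F] →ₗ[F] ℍ[F] := LinearMap.mulLeft F f + LinearMap.mulRight F g with hTdef
  set u : ℍ[F] := f.im with hu
  set v : ℍ[F] := g.im with hv
  set a : F := f.re + g.re with ha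
  set α : F := f.imI^2 + f.imJ^2 + f.imK^2 with hα
  set β : F := g.imI^2 + g.imJ^2 + g.imK^2 with hβ
  have hu2 : u * u = ((-α : F) : ℍ[F]) := by
    ext <;> simp [hu, hα, pow_two] <;> ring
  have hv2 : v * v = ((-β : F) : ℍ[F]) := by
    ext <;> simp [hv, hβ, pow_two] <;> ring
  have hT : ∀ χ : ℍ[F], T χ = a • χ + (u * χ + χ * v) := by
    intro χ
    have h0 : T χ = f * χ + χ * g := by
      simp [hTdef, LinearMap.add_apply, LinearMap.mulLeft_apply, LinearMap.mulRight_apply]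
    rw [h0]
    conv_lhs => rw [← re_add_im f, ← re_add_im g]
    rw [add_mul, mul_add, coe_mul_eq_smul, mul_coe_eq_smul, ha, add_smul]
    abel
  obtain ⟨χ₀, hχ₀mem, hχ₀⟩ := (Submodule.ne_bot_iff _).mp hker
  set m : F := (a^2 + α + β)/2 with hm
  set lam : F := (α - m)/a with hlam
  set mu : F := (β - m)/a with hmu
  have hlammu : lam + mu = -a := by
    rw [hlam, hmu, hm]; field_simp; ring
  set z : ℍ[F] := u - ((lam : F) : ℍ[F]) with hz
  set w : ℍ[F] := v - ((mu : F) : ℍ[F]) with hw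
  have hzne : z ≠ 0 := by
    intro h0
    apply hf
    have h1 : u = ((lam : F) : ℍ[F]) := by rwa [sub_eq_zero] at h0
    have him := congrArg Quaternion.im h1
    simpa [hu] using him
  have hwne : w ≠ 0 := by
    intro h0
    apply hg
    have h1 : v = ((mu : F) : ℍ[F]) := by rwa [sub_eq_zero] at h0
    have him := congrArg Quaternion.im h1
    simpa [hv] using him
  have hker_eq : LinearMap.ker T =
      LinearMap.ker (LinearMap.mulLeft F z) ⊓ LinearMap.ker (LinearMap.mulRight F w) := by
    apply le_antisymm
    · intro χ hχ
      rw [LinearMap.mem_ker] at hχ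
      have step0 : u * χ + χ * v = (-a) • χ := by
        rw [hT χ] at hχ
        have h1 : u * χ + χ * v = -(a • χ) := by linear_combination (norm := module) hχ
        rwa [← neg_smul] at h1
      have E1 : (-α) • χ + u * χ * v = (-a) • (u * χ) := by
        have h1 := congrArg (fun y => u * y) step0
        simp only [mul_add, mul_smul_comm, ← mul_assoc] at h1
        rwa [hu2, coe_mul_eq_smul] at h1
      have E2 : u * χ * v + (-β) • χ = (-a) • (χ * v) := by
        have h1 := congrArg (fun y => y * v) step0
        simp only [add_mul, smul_mul_assoc, mul_assoc] at h1
        rw [hv2, mul_coe_eq_smul] at h1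
        rwa [← mul_assoc] at h1
      have key1 : a • (u * χ) = (α - m) • χ := by
        linear_combination (norm := module)
          ((1:F)/2) • E1 - ((1:F)/2) • E2 + (a/2) • step0
      have key2 : a • (χ * v) = (β - m) • χ := by
        linear_combination (norm := module)
          (-(1:F)/2) • E1 + ((1:F)/2) • E2 + (a/2) • step0
      have hzχ : z * χ = 0 := by
        rw [hz, sub_mul, coe_mul_eq_smul, sub_eq_zero]
        have h1 : a • (u * χ) = a • (lam • χ) := by
          rw [key1, smul_smul, hlam]
          congr 1
          field_simp
        exact smul_right_injective ℍ[F] hane h1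
      have hχw : χ * w = 0 := by
        rw [hw, mul_sub, mul_coe_eq_smul, sub_eq_zero]
        have h1 : a • (χ * v) = a • (mu • χ) := by
          rw [key2, smul_smul, hmu]
          congr 1
          field_simp
        exact smul_right_injective ℍ[F] hane h1
      refine Submodule.mem_inf.mpr ⟨LinearMap.mem_ker.mpr ?_, LinearMap.mem_ker.mpr ?_⟩
      · rw [LinearMap.mulLeft_apply]; exact hzχ
      · rw [LinearMap.mulRight_apply]; exact hχw
    · intro χ hχ
      obtain ⟨h1, h2⟩ := Submodule.mem_inf.mp hχ
      rw [LinearMap.mem_ker, LinearMap.mulLeft_apply] at h1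
      rw [LinearMap.mem_ker, LinearMap.mulRight_apply] at h2
      rw [LinearMap.mem_ker, hT]
      rw [hz, sub_mul, coe_mul_eq_smul, sub_eq_zero] at h1
      rw [hw, mul_sub, mul_coe_eq_smul, sub_eq_zero] at h2
      rw [h1, h2, ← add_smul, ← add_smul]
      have h3 : a + (lam + mu) = 0 := by rw [hlammu]; ring
      rw [h3, zero_smul]
  have hge : 0 < Module.finrank F (LinearMap.ker T) := by
    rw [Module.finrank_pos_iff_exists_ne_zero]
    exact ⟨⟨χ₀, hχ₀mem⟩, by simpa using hχ₀⟩
  have hle : Module.finrank F (LinearMap.ker T) ≤ 1 := by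
    by_contra hcon
    push_neg at hcon
    have hle2 : LinearMap.ker T ≤ LinearMap.ker (LinearMap.mulLeft F z) := by
      rw [hker_eq]; exact inf_le_left
    have heq : LinearMap.ker T = LinearMap.ker (LinearMap.mulLeft F z) := by
      apply Submodule.eq_of_le_of_finrank_le hle2
      calc Module.finrank F (LinearMap.ker (LinearMap.mulLeft F z)) ≤ 2 :=
            aux_ker_mulLeft_le_two F z hzne
        _ ≤ Module.finrank F (LinearMap.ker T) := hcon
    have hzχ₀ : z * χ₀ = 0 := by
      have h1 := hχ₀mem
      rw [hker_eq] at h1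
      have h2 := (Submodule.mem_inf.mp h1).1
      rw [LinearMap.mem_ker, LinearMap.mulLeft_apply] at h2
      exact h2
    obtain ⟨q, hq⟩ := aux_sandwich F χ₀ w hχ₀ hwne
    apply hq
    have hmemq : χ₀ * q ∈ LinearMap.ker (LinearMap.mulLeft F z) := by
      rw [LinearMap.mem_ker, LinearMap.mulLeft_apply, ← mul_assoc, hzχ₀, zero_mul]
    rw [← heq, hker_eq] at hmemq
    have h2 := (Submodule.mem_inf.mp hmemq).2
    rw [LinearMap.mem_ker, LinearMap.mulRight_apply] at h2
    exact h2
  omega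

private lemma aux_backward (F : Type*) [Field F] [CharZero F] (f g : ℍ[F])
    (hf : f.im ≠ 0) (hg : g.im ≠ 0)
    (hrank : Module.finrank F
      (LinearMap.ker (LinearMap.mulLeft F f + LinearMap.mulRight F g)) = 1) :
    f.re + g.re ≠ 0 := by
  intro hazero
  set T : ℍ[F] →ₗ[F] ℍ[F] := LinearMap.mulLeft F f + LinearMap.mulRight F g with hTdef
  set u : ℍ[F] := f.im with hu
  set v : ℍ[F] := g.im with hv
  set α : F := f.imI^2 + f.imJ^2 + f.imK^2 with hα
  set β : F := g.imI^2 + g.imJ^2 + g.imK^2 with hβ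
  have hu2 : u * u = ((-α : F) : ℍ[F]) := by
    ext <;> simp [hu, hα, pow_two] <;> ring
  have hv2 : v * v = ((-β : F) : ℍ[F]) := by
    ext <;> simp [hv, hβ, pow_two] <;> ring
  have hTzero : ∀ χ : ℍ[F], T χ = u * χ + χ * v := by
    intro χ
    have h0 : T χ = f * χ + χ * g := by
      simp [hTdef, LinearMap.add_apply, LinearMap.mulLeft_apply, LinearMap.mulRight_apply]
    rw [h0]
    conv_lhs => rw [← re_add_im f, ← re_add_im g]
    rw [add_mul, mul_add, coe_mul_eq_smul, mul_coe_eq_smul]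
    have h1 : f.re • χ + g.re • χ = 0 := by
      rw [← add_smul, hazero, zero_smul]
    linear_combination (norm := module) h1
  have hker_ne : LinearMap.ker T ≠ ⊥ := by
    intro hbot
    rw [hbot] at hrank
    simp at hrank
  obtain ⟨χ₀, hχ₀mem, hχ₀⟩ := (Submodule.ne_bot_iff _).mp hker_ne
  have hspan : Submodule.span F {χ₀} = LinearMap.ker T := by
    apply Submodule.eq_of_le_of_finrank_le
    · rwa [Submodule.span_singleton_le_iff_mem]
    · rw [hrank, finrank_span_singleton hχ₀]
  have memker : ∀ x : ℍ[F], T x = 0 → ∃ c : F, x = c • χ₀ := by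
    intro x hx
    have h1 : x ∈ Submodule.span F {χ₀} := by rw [hspan]; exact LinearMap.mem_ker.mpr hx
    obtain ⟨c, hc⟩ := Submodule.mem_span_singleton.mp h1
    exact ⟨c, hc.symm⟩
  have h0 : u * χ₀ + χ₀ * v = 0 := by
    rw [← hTzero]; exact LinearMap.mem_ker.mp hχ₀mem
  have hmemu : T (u * χ₀) = 0 := by
    rw [hTzero]
    calc u * (u * χ₀) + (u * χ₀) * v = u * (u * χ₀ + χ₀ * v) := by
          rw [mul_add, mul_assoc]
      _ = 0 := by rw [h0, mul_zero]
  obtain ⟨lam, hlamc⟩ := memker _ hmemu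
  have hαlam : α = -(lam * lam) := by
    have h1 : u * (u * χ₀) = (lam * lam) • χ₀ := by
      rw [hlamc, mul_smul_comm, hlamc, smul_smul]
    have h2 : u * (u * χ₀) = (-α) • χ₀ := by
      rw [← mul_assoc, hu2, coe_mul_eq_smul]
    have h3 : ((-α) - lam * lam) • χ₀ = 0 := by
      rw [sub_smul, ← h1, ← h2, sub_self]
    rcases smul_eq_zero.mp h3 with h | h
    · linear_combination -h
    · exact absurd h hχ₀
  have hv0 : χ₀ * v = (-lam) • χ₀ := by
    have h1 : χ₀ * v = -(u * χ₀) := by linear_combination (norm := module) h0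
    rw [h1, hlamc, neg_smul]
  have hβlam : β = -(lam * lam) := by
    have h1 : χ₀ * (v * v) = (lam * lam) • χ₀ := by
      rw [← mul_assoc, hv0, smul_mul_assoc, hv0, smul_smul]
      congr 1; ring
    have h2 : χ₀ * (v * v) = (-β) • χ₀ := by
      rw [hv2, mul_coe_eq_smul]
    have h3 : ((-β) - lam * lam) • χ₀ = 0 := by
      rw [sub_smul, ← h1, ← h2, sub_self]
    rcases smul_eq_zero.mp h3 with h | h
    · linear_combination -h
    · exact absurd h hχ₀
  by_cases hlamne : lam = 0
  · -- nilpotent case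
    rw [hlamne] at hαlam hβlam
    have huu : u * u = 0 := by rw [hu2, hαlam]; simp
    have hvv : v * v = 0 := by rw [hv2, hβlam]; simp
    have hχ₀v : χ₀ * v = 0 := by rw [hv0, hlamne, neg_zero, zero_smul]
    obtain ⟨p, hp⟩ := aux_sandwich F u v hf hg
    apply hp
    have hmem : T (u * p - p * v) = 0 := by
      rw [hTzero, mul_sub, sub_mul, ← mul_assoc u u p, huu, zero_mul, mul_assoc p v v, hvv,
        mul_zero, mul_assoc u p v]
      abel
    obtain ⟨c, hc⟩ := memker _ hmem
    have h5 : (u * p - p * v) * v = 0 := by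
      rw [hc, smul_mul_assoc, hχ₀v, smul_zero]
    calc u * p * v = (u * p - p * v) * v + p * (v * v) := by
          rw [sub_mul, mul_assoc p v v]; abel
      _ = 0 := by rw [h5, hvv, mul_zero, add_zero]
  · -- split eigenvalue case
    set X : ℍ[F] := ((lam : F) : ℍ[F]) - u with hX
    set Y : ℍ[F] := -((lam : F) : ℍ[F]) - v with hY
    have hXne : X ≠ 0 := by
      intro h0'
      apply hf
      have h1 : ((lam : F) : ℍ[F]) = u := by rwa [sub_eq_zero] at h0'
      have him := congrArg Quaternion.im h1.symm
      simpa [hu] using him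
    have hYne : Y ≠ 0 := by
      intro h0'
      apply hg
      have h1 : -((lam : F) : ℍ[F]) = v := by rwa [sub_eq_zero] at h0'
      have him := congrArg Quaternion.im h1.symm
      simpa [hv] using him
    have huu : u * u = ((lam : F) : ℍ[F]) * ((lam : F) : ℍ[F]) := by
      rw [hu2, hαlam, ← coe_mul]
      congr 1; ring
    have hvv : v * v = ((lam : F) : ℍ[F]) * ((lam : F) : ℍ[F]) := by
      rw [hv2, hβlam, ← coe_mul]
      congr 1; ring
    have eX : u * X = -(((lam : F) : ℍ[F]) * X) := by
      rw [hX, mul_sub, mul_sub, huu]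
      simp only [coe_mul_eq_smul, mul_coe_eq_smul, mul_neg, neg_mul, smul_neg]
      abel
    have eY : Y * v = ((lam : F) : ℍ[F]) * Y := by
      rw [hY, sub_mul, mul_sub, hvv]
      simp only [coe_mul_eq_smul, mul_coe_eq_smul, mul_neg, neg_mul, smul_neg]
      abel
    obtain ⟨q, hq⟩ := aux_sandwich F X Y hXne hYne
    apply hq
    have e1 : u * (X * q * Y) = (X * q * Y) * (-((lam : F) : ℍ[F])) := by
      calc u * (X * q * Y) = (u * X) * q * Y := by rw [← mul_assoc, ← mul_assoc]
        _ = -(((lam : F) : ℍ[F]) * (X * q * Y)) := by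
            rw [eX]; noncomm_ring
        _ = (X * q * Y) * (-((lam : F) : ℍ[F])) := by
            rw [mul_neg, neg_inj, coe_commutes]
    have e2 : (X * q * Y) * v = ((lam : F) : ℍ[F]) * (X * q * Y) := by
      calc (X * q * Y) * v = X * q * (Y * v) := by rw [mul_assoc]
        _ = X * q * (((lam : F) : ℍ[F]) * Y) := by rw [eY]
        _ = ((X * q) * ((lam : F) : ℍ[F])) * Y := by noncomm_ring
        _ = (((lam : F) : ℍ[F]) * (X * q)) * Y := by rw [← coe_commutes]
        _ = ((lam : F) : ℍ[F]) * (X * q * Y) := by noncomm_ring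
    have hmem : T (X * q * Y) = 0 := by
      rw [hTzero, e1, e2, mul_neg, coe_commutes, neg_add_cancel]
    obtain ⟨c, hc⟩ := memker _ hmem
    have hval1 : u * (X * q * Y) = (-lam) • (X * q * Y) := by
      rw [e1, mul_neg, mul_coe_eq_smul, neg_smul]
    have hval2 : u * (X * q * Y) = lam • (X * q * Y) := by
      rw [hc, mul_smul_comm, hlamc, smul_smul, smul_smul, mul_comm]
    have h7 : ((2 : F) * lam) • (X * q * Y) = 0 := by
      have h8 := hval2.symm.trans hval1
      have h9 : (lam - (-lam)) • (X * q * Y) = 0 := by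
        rw [sub_smul, h8, sub_self]
      convert h9 using 2
      ring
    rcases smul_eq_zero.mp h7 with h | h
    · exact absurd (by linear_combination h / 2) hlamne
    · exact h

theorem sylvester_rank_three_iff (F : Type*) [Field F] [CharZero F] (f g : ℍ[F])
    (hf : f.im ≠ 0) (hg : g.im ≠ 0)
    (hsing : ¬ Function.Bijective (fun χ : ℍ[F] => f * χ + χ * g)) :
    f.re + g.re ≠ 0 ↔
      Module.finrank F
        (LinearMap.ker (LinearMap.mulLeft F f + LinearMap.mulRight F g)) = 1 := by
  have hker_ne : LinearMap.ker (LinearMap.mulLeft F f + LinearMap.mulRight F g) ≠ ⊥ := by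
    intro hbot
    apply hsing
    have hinj : Function.Injective (LinearMap.mulLeft F f + LinearMap.mulRight F g) :=
      LinearMap.ker_eq_bot.mp hbot
    have hsurj : Function.Surjective (LinearMap.mulLeft F f + LinearMap.mulRight F g) :=
      (LinearMap.injective_iff_surjective).mp hinj
    have hfun : (fun χ : ℍ[F] => f * χ + χ * g) =
        ⇑(LinearMap.mulLeft F f + LinearMap.mulRight F g) := by
      funext χ
      simp [LinearMap.add_apply, LinearMap.mulLeft_apply, LinearMap.mulRight_apply]
    rw [hfun]
    exact ⟨hinj, hsurj⟩
  constructor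
  · exact aux_forward F f g hf hg hker_ne
  · exact aux_backward F f g hf hg
end

section
/- Let F be a linearly ordered field (the algebraic counterpart of the slice-domain case, so that normSq is anisotropic and every nonzero element of ℍ[F] is invertible) and let f, g ∈ ℍ[F] be nonzero. Then the following are equivalent: (i) f * f + (2 · re g) • f + (normSq g) • 1 = 0; (ii) g * g + (2 · re f) • g + (normSq f) • 1 = 0; (iii) there exists a nonzero h ∈ ℍ[F] with h * f = −g * h (i.e. f ≃ −g). -/
open Quaternion

private theorem re_mul_comm (F : Type*) [Field F] [LinearOrder F] [IsStrictOrderedRing F] (a b : ℍ[F]) :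
    (a * b).re = (b * a).re := by
  simp only [Quaternion.re_mul]; ring

set_option maxHeartbeats 1000000 in
private theorem cond_iff (F : Type*) [Field F] [LinearOrder F] [IsStrictOrderedRing F] (f g : ℍ[F]) :
    f * f + (2 * g.re) • f + Quaternion.normSq g • (1 : ℍ[F]) = 0 ↔
      (f.re = -g.re ∧ Quaternion.normSq f = Quaternion.normSq g) := by
  constructor
  · intro h
    have h0 := congrArg QuaternionAlgebra.re h
    have h1 := congrArg QuaternionAlgebra.imI h
    have h2 := congrArg QuaternionAlgebra.imJ h
    have h3 := congrArg QuaternionAlgebra.imK h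
    simp only [Quaternion.re_add, Quaternion.re_mul, Quaternion.re_smul, Quaternion.re_one,
      Quaternion.imI_add, Quaternion.imI_mul, Quaternion.imI_smul, Quaternion.imI_one,
      Quaternion.imJ_add, Quaternion.imJ_mul, Quaternion.imJ_smul, Quaternion.imJ_one,
      Quaternion.imK_add, Quaternion.imK_mul, Quaternion.imK_smul, Quaternion.imK_one,
      Quaternion.re_zero, Quaternion.imI_zero, Quaternion.imJ_zero, Quaternion.imK_zero,
      Quaternion.normSq_def', smul_eq_mul, mul_zero, add_zero, mul_one] at h0 h1 h2 h3
    rcases eq_or_ne (f.re + g.re) 0 with hc | hc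
    · refine ⟨by linarith, ?_⟩
      simp only [Quaternion.normSq_def']
      linear_combination -h0 + 2*f.re*hc
    · exfalso
      have hb : f.imI = 0 := by
        rcases mul_eq_zero.1 (show f.imI * (f.re + g.re) = 0 by linear_combination h1/2) with h | h
        · exact h
        · exact absurd h hc
      have hcJ : f.imJ = 0 := by
        rcases mul_eq_zero.1 (show f.imJ * (f.re + g.re) = 0 by linear_combination h2/2) with h | h
        · exact h
        · exact absurd h hc
      have hcK : f.imK = 0 := by
        rcases mul_eq_zero.1 (show f.imK * (f.re + g.re) = 0 by linear_combination h3/2) with h | h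
        · exact h
        · exact absurd h hc
      rw [hb, hcJ, hcK] at h0
      have hpos : (f.re + g.re)^2 > 0 := by positivity
      nlinarith [h0, hpos, sq_nonneg g.imI, sq_nonneg g.imJ, sq_nonneg g.imK]
  · rintro ⟨hre, hns⟩
    have hq : f * f = (2 * f.re) • f - Quaternion.normSq f • (1 : ℍ[F]) := by
      ext <;> simp [Quaternion.re_mul, Quaternion.imI_mul, Quaternion.imJ_mul, Quaternion.imK_mul,
        Quaternion.normSq_def'] <;> ring
    rw [hq, hre, hns]
    module

private def qI (F : Type*) [Field F] [LinearOrder F] [IsStrictOrderedRing F] : ℍ[F] := ⟨0,1,0,0⟩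
private def qJ (F : Type*) [Field F] [LinearOrder F] [IsStrictOrderedRing F] : ℍ[F] := ⟨0,0,1,0⟩
@[simp] private lemma qI_re (F : Type*) [Field F] [LinearOrder F] [IsStrictOrderedRing F] : (qI F).re = 0 := rfl
@[simp] private lemma qI_imI (F : Type*) [Field F] [LinearOrder F] [IsStrictOrderedRing F] : (qI F).imI = 1 := rfl
@[simp] private lemma qI_imJ (F : Type*) [Field F] [LinearOrder F] [IsStrictOrderedRing F] : (qI F).imJ = 0 := rfl
@[simp] private lemma qI_imK (F : Type*) [Field F] [LinearOrder F] [IsStrictOrderedRing F] : (qI F).imK = 0 := rfl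
@[simp] private lemma qJ_re (F : Type*) [Field F] [LinearOrder F] [IsStrictOrderedRing F] : (qJ F).re = 0 := rfl
@[simp] private lemma qJ_imI (F : Type*) [Field F] [LinearOrder F] [IsStrictOrderedRing F] : (qJ F).imI = 0 := rfl
@[simp] private lemma qJ_imJ (F : Type*) [Field F] [LinearOrder F] [IsStrictOrderedRing F] : (qJ F).imJ = 1 := rfl
@[simp] private lemma qJ_imK (F : Type*) [Field F] [LinearOrder F] [IsStrictOrderedRing F] : (qJ F).imK = 0 := rfl

set_option maxHeartbeats 1000000 in
private theorem exists_conj (F : Type*) [Field F] [LinearOrder F] [IsStrictOrderedRing F] (f g : ℍ[F])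
    (hre : f.re = -g.re) (hns : Quaternion.normSq f = Quaternion.normSq g) :
    ∃ h : ℍ[F], h ≠ 0 ∧ h * f = -g * h := by
  set q : ℍ[F] := -g with hqdef
  have hqre : (2 * q.re) = 2 * f.re := by simp [hqdef, hre]
  have hqns : Quaternion.normSq q = Quaternion.normSq f := by
    rw [hqdef, Quaternion.normSq_neg, hns]
  have quad : ∀ a : ℍ[F], a * a = (2 * a.re) • a - Quaternion.normSq a • (1 : ℍ[F]) := by
    intro a
    ext <;> simp [Quaternion.re_mul, Quaternion.imI_mul, Quaternion.imJ_mul, Quaternion.imK_mul,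
      Quaternion.normSq_def'] <;> ring
  have key : ∀ t : ℍ[F], (q * t + t * f - (2 * f.re) • t) * f
      = q * (q * t + t * f - (2 * f.re) • t) := by
    intro t
    have h1 : f * f = (2 * f.re) • f - Quaternion.normSq f • (1 : ℍ[F]) := quad f
    have h2 : q * q = (2 * f.re) • q - Quaternion.normSq f • (1 : ℍ[F]) := by
      rw [quad q, hqre, hqns]
    have e1 : (q * t + t * f - (2 * f.re) • t) * f
        = q * t * f + t * (f * f) - (2 * f.re) • (t * f) := by
      simp [sub_mul, add_mul, mul_assoc, smul_mul_assoc]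
    have e2 : q * (q * t + t * f - (2 * f.re) • t)
        = (q * q) * t + q * t * f - (2 * f.re) • (q * t) := by
      simp [mul_sub, mul_add, mul_assoc, mul_smul_comm]
    have e3 : t * ((2 * f.re) • f - Quaternion.normSq f • (1 : ℍ[F]))
        = (2 * f.re) • (t * f) - Quaternion.normSq f • t := by
      rw [mul_sub, mul_smul_comm, mul_smul_comm, mul_one]
    have e4 : ((2 * f.re) • q - Quaternion.normSq f • (1 : ℍ[F])) * t
        = (2 * f.re) • (q * t) - Quaternion.normSq f • t := by
      rw [sub_mul, smul_mul_assoc, smul_mul_assoc, one_mul]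
    rw [e1, e2, h1, h2, e3, e4]
    abel
  -- now pick a t making h nonzero
  by_cases H1 : q * 1 + 1 * f - (2 * f.re) • (1 : ℍ[F]) ≠ 0
  · exact ⟨_, H1, key 1⟩
  by_cases H2 : q * qI F + qI F * f - (2 * f.re) • qI F ≠ 0
  · exact ⟨_, H2, key (qI F)⟩
  by_cases H3 : q * qJ F + qJ F * f - (2 * f.re) • qJ F ≠ 0
  · exact ⟨_, H3, key (qJ F)⟩
  -- all zero: then f = -g, use h = 1
  push_neg at H1 H2 H3
  refine ⟨1, one_ne_zero, ?_⟩
  rw [mul_one, one_mul]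
  have c1I := congrArg QuaternionAlgebra.imI H1
  have c1J := congrArg QuaternionAlgebra.imJ H1
  have c1K := congrArg QuaternionAlgebra.imK H1
  have c2J := congrArg QuaternionAlgebra.imJ H2
  have c2K := congrArg QuaternionAlgebra.imK H2
  have c3I := congrArg QuaternionAlgebra.imI H3
  have c3K := congrArg QuaternionAlgebra.imK H3
  simp only [Quaternion.imI_add, Quaternion.imJ_add, Quaternion.imK_add,
    Quaternion.imI_sub, Quaternion.imJ_sub, Quaternion.imK_sub,
    Quaternion.imI_mul, Quaternion.imJ_mul, Quaternion.imK_mul,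
    Quaternion.imI_smul, Quaternion.imJ_smul, Quaternion.imK_smul,
    Quaternion.imI_one, Quaternion.imJ_one, Quaternion.imK_one,
    Quaternion.re_one, Quaternion.re_neg, Quaternion.imI_neg, Quaternion.imJ_neg,
    Quaternion.imK_neg, Quaternion.imI_zero, Quaternion.imJ_zero, Quaternion.imK_zero,
    qI_re, qI_imI, qI_imJ, qI_imK, qJ_re, qJ_imI, qJ_imJ, qJ_imK,
    smul_eq_mul, mul_zero, mul_one, zero_mul, one_mul, add_zero, zero_add, sub_zero,
    zero_sub, mul_neg, neg_zero, hqdef] at c1I c1J c1K c2J c2K c3I c3K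
  ext
  · show f.re = (-g).re; simp [hre]
  · show f.imI = (-g).imI; simp; linarith
  · show f.imJ = (-g).imJ; simp; linarith
  · show f.imK = (-g).imK; simp; linarith

private theorem conj_invariants (F : Type*) [Field F] [LinearOrder F] [IsStrictOrderedRing F] (f g h : ℍ[F]) (hh : h ≠ 0)
    (hc : h * f = -g * h) : f.re = -g.re ∧ Quaternion.normSq f = Quaternion.normSq g := by
  have hns0 : Quaternion.normSq h ≠ 0 := Quaternion.normSq_ne_zero.2 hh
  constructor
  · have key := congrArg (fun x : ℍ[F] => (x * star h).re) hc
    change (h * f * star h).re = (-g * h * star h).re at key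
    have l1 : (h * f * star h).re = Quaternion.normSq h * f.re := by
      rw [re_mul_comm, ← mul_assoc, Quaternion.star_mul_self]
      simp [Quaternion.re_mul]
    have l2 : (-g * h * star h).re = -(Quaternion.normSq h * g.re) := by
      rw [mul_assoc, Quaternion.mul_star_eq_coe]
      simp [Quaternion.re_mul, Quaternion.normSq_def']
      ring
    rw [l1, l2] at key
    exact mul_left_cancel₀ hns0 (by linarith [key] :
      Quaternion.normSq h * f.re = Quaternion.normSq h * (-g.re))
  · have key := congrArg Quaternion.normSq hc
    rw [map_mul, map_mul, Quaternion.normSq_neg] at key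
    exact mul_left_cancel₀ hns0 (by linarith [key] :
      Quaternion.normSq h * Quaternion.normSq f = Quaternion.normSq h * Quaternion.normSq g)

theorem lambdaL_vanish_tfae (F : Type*) [Field F] [LinearOrder F] [IsStrictOrderedRing F] (f g : ℍ[F])
    (hf : f ≠ 0) (hg : g ≠ 0) :
    List.TFAE
      [f * f + (2 * g.re) • f + Quaternion.normSq g • (1 : ℍ[F]) = 0,
       g * g + (2 * f.re) • g + Quaternion.normSq f • (1 : ℍ[F]) = 0,
       ∃ h : ℍ[F], h ≠ 0 ∧ h * f = -g * h] := by
  tfae_have 1 ↔ 2 := by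
    rw [cond_iff, cond_iff]
    constructor <;> rintro ⟨h1, h2⟩ <;> exact ⟨by linarith, h2.symm⟩
  tfae_have 1 → 3 := by
    intro h1
    obtain ⟨hre, hns⟩ := (cond_iff F f g).1 h1
    exact exists_conj F f g hre hns
  tfae_have 3 → 1 := by
    rintro ⟨h, hh, hc⟩
    obtain ⟨hre, hns⟩ := conj_invariants F f g h hh hc
    exact (cond_iff F f g).2 ⟨hre, hns⟩
  tfae_finish
end

section
/- Let F be a field of characteristic zero and f, g ∈ ℍ[F] with normSq f ≠ 0, normSq g ≠ 0, and Δ := (re f + re g)² · [(re f + re g)² + 2 (normSq (im f) + normSq (im g))] + (normSq (im f) − normSq (im g))² ≠ 0. Define λ_L := (2 · re g) • 1 + f + (normSq g · (normSq f)⁻¹) • star f. Then normSq f · normSq λ_L = Δ, so λ_L is invertible, and for every b ∈ ℍ[F] the unique solution χ of the Sylvester equation f * χ + χ * g = b is χ = (normSq λ_L)⁻¹ • (star λ_L * (b + (normSq f)⁻¹ • (star f * b * star g))). -/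
open Quaternion

section Aux
variable {F : Type*} [Field F] (f g : ℍ[F])

theorem sylvester_aux_keyU (hf : Quaternion.normSq f ≠ 0) :
    f * ((2 * g.re) • (1 : ℍ[F]) + f +
        (Quaternion.normSq g * (Quaternion.normSq f)⁻¹) • star f) =
      ((Quaternion.normSq g : F) : ℍ[F]) + (2 * g.re) • f + f ^ 2 := by
  rw [mul_add, mul_add, mul_smul_comm, mul_one, mul_smul_comm, Quaternion.self_mul_star,
    Quaternion.smul_coe, mul_assoc, inv_mul_cancel₀ hf, mul_one, sq]
  ring_nf
  abel

theorem sylvester_aux_keyChi (b χ : ℍ[F]) (hb : f * χ + χ * g = b) :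
    (((Quaternion.normSq g : F) : ℍ[F]) + (2 * g.re) • f + f ^ 2) * χ
      = f * b + b * star g := by
  subst hb
  have h1 : (2 * g.re) • (f * χ) = f * χ * (g + star g) := by
    rw [Quaternion.self_add_star', Quaternion.mul_coe_eq_smul]
  have h2 : ((Quaternion.normSq g : F) : ℍ[F]) * χ = χ * (g * star g) := by
    rw [Quaternion.self_mul_star, Quaternion.mul_coe_eq_smul, Quaternion.coe_mul_eq_smul]
  rw [add_mul, add_mul, smul_mul_assoc, h2, h1]
  noncomm_ring

theorem sylvester_aux_massage (lam b : ℍ[F]) (hf : Quaternion.normSq f ≠ 0)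
    (hl : Quaternion.normSq lam ≠ 0) :
    (Quaternion.normSq (f * lam))⁻¹ • (star (f * lam) * (f * b + b * star g)) =
      (Quaternion.normSq lam)⁻¹ •
        (star lam * (b + (Quaternion.normSq f)⁻¹ • (star f * b * star g))) := by
  have expand : star f * (f * b + b * star g)
      = Quaternion.normSq f • b + star f * b * star g := by
    rw [mul_add, ← mul_assoc, Quaternion.star_mul_self, Quaternion.coe_mul_eq_smul, mul_assoc]
  rw [map_mul, star_mul, mul_assoc, expand, mul_add, mul_add, mul_smul_comm, mul_smul_comm,
    ← mul_assoc, ← mul_assoc]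
  match_scalars <;> (field_simp; try ring)

end Aux

theorem sylvester_explicit_solution (F : Type*) [Field F] [CharZero F] (f g : ℍ[F])
    (hf : Quaternion.normSq f ≠ 0) (hg : Quaternion.normSq g ≠ 0)
    (hDelta :
      (f.re + g.re) ^ 2 *
          ((f.re + g.re) ^ 2 +
            2 * (Quaternion.normSq f.im + Quaternion.normSq g.im)) +
        (Quaternion.normSq f.im - Quaternion.normSq g.im) ^ 2 ≠ 0) :
    Quaternion.normSq f *
        Quaternion.normSq
          ((2 * g.re) • (1 : ℍ[F]) + f +
            (Quaternion.normSq g * (Quaternion.normSq f)⁻¹) • star f) =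
      (f.re + g.re) ^ 2 *
          ((f.re + g.re) ^ 2 +
            2 * (Quaternion.normSq f.im + Quaternion.normSq g.im)) +
        (Quaternion.normSq f.im - Quaternion.normSq g.im) ^ 2 ∧
    Quaternion.normSq
        ((2 * g.re) • (1 : ℍ[F]) + f +
          (Quaternion.normSq g * (Quaternion.normSq f)⁻¹) • star f) ≠ 0 ∧
    (∀ b χ : ℍ[F],
      f * χ + χ * g = b ↔
        χ =
          (Quaternion.normSq
              ((2 * g.re) • (1 : ℍ[F]) + f +
                (Quaternion.normSq g * (Quaternion.normSq f)⁻¹) • star f))⁻¹ •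
            (star ((2 * g.re) • (1 : ℍ[F]) + f +
                (Quaternion.normSq g * (Quaternion.normSq f)⁻¹) • star f) *
              (b + (Quaternion.normSq f)⁻¹ • (star f * b * star g)))) := by
  set lam : ℍ[F] := (2 * g.re) • (1 : ℍ[F]) + f +
      (Quaternion.normSq g * (Quaternion.normSq f)⁻¹) • star f with hlam
  have part1 : Quaternion.normSq f * Quaternion.normSq lam =
      (f.re + g.re) ^ 2 *
          ((f.re + g.re) ^ 2 +
            2 * (Quaternion.normSq f.im + Quaternion.normSq g.im)) +
        (Quaternion.normSq f.im - Quaternion.normSq g.im) ^ 2 := by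
    rw [hlam]
    simp only [Quaternion.normSq_def', Quaternion.re_add, Quaternion.imI_add, Quaternion.imJ_add,
      Quaternion.imK_add, Quaternion.re_smul, Quaternion.imI_smul, Quaternion.imJ_smul,
      Quaternion.imK_smul, Quaternion.re_one, Quaternion.imI_one, Quaternion.imJ_one,
      Quaternion.imK_one, Quaternion.re_star, Quaternion.imI_star, Quaternion.imJ_star,
      Quaternion.imK_star, Quaternion.re_im, Quaternion.imI_im, Quaternion.imJ_im,
      Quaternion.imK_im, smul_eq_mul] at *
    field_simp
    ring
  have hl : Quaternion.normSq lam ≠ 0 := by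
    intro h
    rw [h, mul_zero] at part1
    exact hDelta part1.symm
  -- the forward implication
  have fwd : ∀ b χ : ℍ[F], f * χ + χ * g = b →
      χ = (Quaternion.normSq lam)⁻¹ •
        (star lam * (b + (Quaternion.normSq f)⁻¹ • (star f * b * star g))) := by
    intro b χ hb
    have hu : f * lam * χ = f * b + b * star g := by
      rw [hlam, sylvester_aux_keyU f g hf]
      exact sylvester_aux_keyChi f g b χ hb
    have hnu : Quaternion.normSq (f * lam) ≠ 0 := by
      rw [map_mul]; exact mul_ne_zero hf hl
    have : χ = (Quaternion.normSq (f * lam))⁻¹ • (star (f * lam) * (f * lam * χ)) := by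
      rw [← mul_assoc, Quaternion.star_mul_self, Quaternion.coe_mul_eq_smul, smul_smul,
        inv_mul_cancel₀ hnu, one_smul]
    rw [this, hu, sylvester_aux_massage f g lam b hf hl]
  -- linear map and surjectivity
  let S : ℍ[F] →ₗ[F] ℍ[F] :=
    { toFun := fun χ => f * χ + χ * g
      map_add' := fun x y => by noncomm_ring
      map_smul' := fun r x => by
        simp [mul_smul_comm, smul_mul_assoc, smul_add] }
  have hinj : Function.Injective S := by
    rw [← LinearMap.ker_eq_bot, LinearMap.ker_eq_bot']
    intro χ hχ
    have := fwd 0 χ hχ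
    simpa using this
  have hsurj : Function.Surjective S := (LinearMap.injective_iff_surjective).mp hinj
  refine ⟨part1, hl, fun b χ => ⟨fwd b χ, ?_⟩⟩
  intro hχ
  obtain ⟨χ₀, hχ₀⟩ := hsurj b
  have h0 : f * χ₀ + χ₀ * g = b := hχ₀
  rw [hχ, ← fwd b χ₀ h0]
  exact h0
end

section
/- Let F be a field of characteristic zero and f, g ∈ ℍ[F] with im f ≠ 0 and im g ≠ 0. If re f = re g and normSq (im f) = normSq (im g), then f ≃ g: there exists h ∈ ℍ[F] with normSq h ≠ 0 and h * f = g * h. (Combined with the converse, f ≃ g if and only if re f = re g and normSq (im f) = normSq (im g), even in the presence of zero divisors.) -/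
open Quaternion

section Helpers

variable {F : Type*} [Field F]

private lemma sq_pure (u : ℍ[F]) (hu : u.re = 0) :
    u * u = ((-(Quaternion.normSq u) : F) : ℍ[F]) := by
  ext
  · rw [Quaternion.re_coe, Quaternion.re_mul, Quaternion.normSq_def', hu]; ring
  · rw [Quaternion.imI_coe, Quaternion.imI_mul, hu]; ring
  · rw [Quaternion.imJ_coe, Quaternion.imJ_mul, hu]; ring
  · rw [Quaternion.imK_coe, Quaternion.imK_mul, hu]; ring

private lemma cross_zero (a1 a2 a3 b1 b2 b3 : F)
    (ha : a1 ≠ 0 ∨ a2 ≠ 0 ∨ a3 ≠ 0)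
    (e1 : a2 * b3 - a3 * b2 = 0) (e2 : a3 * b1 - a1 * b3 = 0)
    (e3 : a1 * b2 - a2 * b1 = 0) :
    ∃ t : F, b1 = t * a1 ∧ b2 = t * a2 ∧ b3 = t * a3 := by
  rcases ha with h | h | h
  · refine ⟨b1 / a1, ?_, ?_, ?_⟩
    · field_simp
    · field_simp; linear_combination e3
    · field_simp; linear_combination -e2
  · refine ⟨b2 / a2, ?_, ?_, ?_⟩
    · field_simp; linear_combination -e3
    · field_simp
    · field_simp; linear_combination e1
  · refine ⟨b3 / a3, ?_, ?_, ?_⟩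
    · field_simp; linear_combination e2
    · field_simp; linear_combination -e1
    · field_simp

private def mkQ (a b c d : F) : ℍ[F] := ⟨a, b, c, d⟩

private lemma mkQ_re (a b c d : F) : (mkQ a b c d).re = a := rfl
private lemma mkQ_imI (a b c d : F) : (mkQ a b c d).imI = b := rfl
private lemma mkQ_imJ (a b c d : F) : (mkQ a b c d).imJ = c := rfl
private lemma mkQ_imK (a b c d : F) : (mkQ a b c d).imK = d := rfl

private lemma three_choice (a b c : F) (h : a + b + c ≠ 0) : a ≠ 0 ∨ b ≠ 0 ∨ c ≠ 0 := by
  by_contra hc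
  push_neg at hc
  exact h (by rw [hc.1, hc.2.1, hc.2.2]; ring)

end Helpers

section Key

variable {F : Type*} [Field F]

private lemma case_B_aux (u v E : ℍ[F]) (hv : v.re = 0)
    (hsq : u * u = v * v) (hUV : Quaternion.normSq (u - v) ≠ 0)
    (hp : Quaternion.normSq (v * E - E * v) ≠ 0) :
    ∃ h : ℍ[F], Quaternion.normSq h ≠ 0 ∧ h * u = v * h := by
  set p := v * E - E * v with hp_def
  have hanti : p * v = -(v * p) := by
    have h1 : p * v + v * p = v * v * E - E * (v * v) := by rw [hp_def]; noncomm_ring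
    have h2 : v * v * E - E * (v * v) = 0 := by
      rw [sq_pure v hv, ← Quaternion.coe_commutes, sub_self]
    exact eq_neg_of_add_eq_zero_left (h1.trans h2)
  refine ⟨p * (u - v), ?_, ?_⟩
  · rw [map_mul]
    exact mul_ne_zero hp hUV
  · have hmul : (u - v) * u = -(v * (u - v)) := by rw [sub_mul, hsq]; noncomm_ring
    calc p * (u - v) * u = p * ((u - v) * u) := by rw [mul_assoc]
      _ = p * -(v * (u - v)) := by rw [hmul]
      _ = -(p * v) * (u - v) := by noncomm_ring
      _ = v * p * (u - v) := by rw [hanti, neg_neg]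
      _ = v * (p * (u - v)) := by rw [mul_assoc]

end Key

section Key2

variable {F : Type*} [Field F] [CharZero F]

private lemma key_pure (u v : ℍ[F]) (hu : u.re = 0) (hv : v.re = 0)
    (hu0 : u ≠ 0) (hv0 : v ≠ 0) (hn : Quaternion.normSq u = Quaternion.normSq v) :
    ∃ h : ℍ[F], Quaternion.normSq h ≠ 0 ∧ h * u = v * h := by
  have hn' : u.imI ^ 2 + u.imJ ^ 2 + u.imK ^ 2 = v.imI ^ 2 + v.imJ ^ 2 + v.imK ^ 2 := by
    have := hn
    rw [Quaternion.normSq_def', Quaternion.normSq_def', hu, hv] at this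
    linear_combination this
  have hsq : u * u = v * v := by
    rw [sq_pure u hu, sq_pure v hv, hn]
  -- c is the inner product of the imaginary parts
  set c : F := u.imI * v.imI + u.imJ * v.imJ + u.imK * v.imK with hc_def
  by_cases hc : Quaternion.normSq u + c ≠ 0
  · -- h = u + v works
    refine ⟨u + v, ?_, ?_⟩
    · have : Quaternion.normSq (u + v) = 2 * (Quaternion.normSq u + c) := by
        rw [Quaternion.normSq_def', Quaternion.normSq_def']
        simp only [Quaternion.re_add, Quaternion.imI_add, Quaternion.imJ_add,
          Quaternion.imK_add, hu, hv, hc_def]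
        linear_combination -hn'
      rw [this]
      exact mul_ne_zero two_ne_zero hc
    · rw [add_mul, hsq, mul_add, add_comm]
  · push_neg at hc
    by_cases hN : Quaternion.normSq u = 0
    · -- degenerate case: N = 0, c = 0, so v is proportional to u
      have hNu : u.imI ^ 2 + u.imJ ^ 2 + u.imK ^ 2 = 0 := by
        rw [Quaternion.normSq_def', hu] at hN
        linear_combination hN
      have hNv : v.imI ^ 2 + v.imJ ^ 2 + v.imK ^ 2 = 0 := by
        linear_combination hNu - hn'
      have hc0 : u.imI * v.imI + u.imJ * v.imJ + u.imK * v.imK = 0 := by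
        rw [Quaternion.normSq_def', hu, hc_def] at hc
        linear_combination hc - hNu
      have hu1 : u.imI ≠ 0 ∨ u.imJ ≠ 0 ∨ u.imK ≠ 0 := by
        by_contra h0
        push_neg at h0
        exact hu0 (by ext <;> simp [hu, h0.1, h0.2.1, h0.2.2])
      have hv1 : v.imI ≠ 0 ∨ v.imJ ≠ 0 ∨ v.imK ≠ 0 := by
        by_contra h0
        push_neg at h0
        exact hv0 (by ext <;> simp [hv, h0.1, h0.2.1, h0.2.2])
      obtain ⟨lam, hl1, hl2, hl3⟩ :
          ∃ t : F, v.imI = t * u.imI ∧ v.imJ = t * u.imJ ∧ v.imK = t * u.imK := by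
        obtain ⟨t, ht1, ht2, ht3⟩ := cross_zero u.imI u.imJ u.imK
          (u.imJ * v.imK - u.imK * v.imJ) (u.imK * v.imI - u.imI * v.imK)
          (u.imI * v.imJ - u.imJ * v.imI) hu1
          (by linear_combination u.imI * hc0 - v.imI * hNu)
          (by linear_combination u.imJ * hc0 - v.imJ * hNu)
          (by linear_combination u.imK * hc0 - v.imK * hNu)
        obtain ⟨s, hs1, hs2, hs3⟩ := cross_zero v.imI v.imJ v.imK
          (u.imJ * v.imK - u.imK * v.imJ) (u.imK * v.imI - u.imI * v.imK)
          (u.imI * v.imJ - u.imJ * v.imI) hv1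
          (by linear_combination u.imI * hNv - v.imI * hc0)
          (by linear_combination u.imJ * hNv - v.imJ * hc0)
          (by linear_combination u.imK * hNv - v.imK * hc0)
        by_cases hts : t = 0
        · exact cross_zero u.imI u.imJ u.imK v.imI v.imJ v.imK hu1
            (by linear_combination ht1 + u.imI * hts)
            (by linear_combination ht2 + u.imJ * hts)
            (by linear_combination ht3 + u.imK * hts)
        · have hs0 : s ≠ 0 := by
            intro h0
            have k1 : u.imI = 0 := by
              have : t * u.imI = 0 := by linear_combination -ht1 + hs1 + v.imI * h0
              exact (mul_eq_zero.mp this).resolve_left hts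
            have k2 : u.imJ = 0 := by
              have : t * u.imJ = 0 := by linear_combination -ht2 + hs2 + v.imJ * h0
              exact (mul_eq_zero.mp this).resolve_left hts
            have k3 : u.imK = 0 := by
              have : t * u.imK = 0 := by linear_combination -ht3 + hs3 + v.imK * h0
              exact (mul_eq_zero.mp this).resolve_left hts
            rcases hu1 with h | h | h <;> [exact h k1; exact h k2; exact h k3]
          refine ⟨t / s, ?_, ?_, ?_⟩ <;> field_simp
          · linear_combination ht1 - hs1
          · linear_combination ht2 - hs2
          · linear_combination ht3 - hs3
      have hlam0 : lam ≠ 0 := by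
        intro h0
        exact hv0 (by ext <;> simp [hv, hl1, hl2, hl3, h0])
      by_cases hlam1 : lam = 1
      · refine ⟨1, ?_, ?_⟩
        · simp
        · have huv : v = u := by ext <;> simp [hu, hv, hl1, hl2, hl3, hlam1]
          rw [one_mul, mul_one, huv]
      · have h1lam : (1 : F) - lam ≠ 0 := sub_ne_zero_of_ne (Ne.symm hlam1)
        rcases hu1 with hd | hd | hd
        · -- use basis vector paired with u.imI
          refine ⟨(mkQ (u.imI * (1 + lam)) (0) ((1 - lam) * u.imK) (-((1 - lam) * u.imJ))), ?_, ?_⟩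
          · have hns : Quaternion.normSq (mkQ (u.imI * (1 + lam)) (0) ((1 - lam) * u.imK) (-((1 - lam) * u.imJ))) = u.imI ^ 2 * (4 * lam) := by
              rw [Quaternion.normSq_def', mkQ_re, mkQ_imI, mkQ_imJ, mkQ_imK]
              linear_combination (1 - lam) ^ 2 * hNu
            rw [hns]
            exact mul_ne_zero (pow_ne_zero 2 hd) (mul_ne_zero (by norm_num) hlam0)
          · ext <;>
              simp only [Quaternion.re_mul, Quaternion.imI_mul, Quaternion.imJ_mul,
                Quaternion.imK_mul, hu, hv, hl1, hl2, hl3, mkQ_re, mkQ_imI, mkQ_imJ, mkQ_imK] <;>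
              (try ring) <;>
              linear_combination ((1 - lam) * (1 + lam)) * hNu
        · -- use basis vector paired with u.imJ
          refine ⟨(mkQ (u.imJ * (1 + lam)) (-((1 - lam) * u.imK)) (0) ((1 - lam) * u.imI)), ?_, ?_⟩
          · have hns : Quaternion.normSq (mkQ (u.imJ * (1 + lam)) (-((1 - lam) * u.imK)) (0) ((1 - lam) * u.imI)) = u.imJ ^ 2 * (4 * lam) := by
              rw [Quaternion.normSq_def', mkQ_re, mkQ_imI, mkQ_imJ, mkQ_imK]
              linear_combination (1 - lam) ^ 2 * hNu
            rw [hns]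
            exact mul_ne_zero (pow_ne_zero 2 hd) (mul_ne_zero (by norm_num) hlam0)
          · ext <;>
              simp only [Quaternion.re_mul, Quaternion.imI_mul, Quaternion.imJ_mul,
                Quaternion.imK_mul, hu, hv, hl1, hl2, hl3, mkQ_re, mkQ_imI, mkQ_imJ, mkQ_imK] <;>
              (try ring) <;>
              linear_combination ((1 - lam) * (1 + lam)) * hNu
        · -- use basis vector paired with u.imK
          refine ⟨(mkQ (u.imK * (1 + lam)) ((1 - lam) * u.imJ) (-((1 - lam) * u.imI)) (0)), ?_, ?_⟩
          · have hns : Quaternion.normSq (mkQ (u.imK * (1 + lam)) ((1 - lam) * u.imJ) (-((1 - lam) * u.imI)) (0)) = u.imK ^ 2 * (4 * lam) := by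
              rw [Quaternion.normSq_def', mkQ_re, mkQ_imI, mkQ_imJ, mkQ_imK]
              linear_combination (1 - lam) ^ 2 * hNu
            rw [hns]
            exact mul_ne_zero (pow_ne_zero 2 hd) (mul_ne_zero (by norm_num) hlam0)
          · ext <;>
              simp only [Quaternion.re_mul, Quaternion.imI_mul, Quaternion.imJ_mul,
                Quaternion.imK_mul, hu, hv, hl1, hl2, hl3, mkQ_re, mkQ_imI, mkQ_imJ, mkQ_imK] <;>
              (try ring) <;>
              linear_combination ((1 - lam) * (1 + lam)) * hNu
    · -- N ≠ 0, c = -N : conjugate u to -v first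
      have hcc : (u.imI ^ 2 + u.imJ ^ 2 + u.imK ^ 2) +
          (u.imI * v.imI + u.imJ * v.imJ + u.imK * v.imK) = 0 := by
        rw [Quaternion.normSq_def', hu, hc_def] at hc
        linear_combination hc
      have hNu : u.imI ^ 2 + u.imJ ^ 2 + u.imK ^ 2 ≠ 0 := by
        intro h0
        exact hN (by rw [Quaternion.normSq_def', hu]; linear_combination h0)
      have hUV : Quaternion.normSq (u - v) ≠ 0 := by
        have h4 : Quaternion.normSq (u - v) =
            4 * (u.imI ^ 2 + u.imJ ^ 2 + u.imK ^ 2) := by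
          rw [Quaternion.normSq_def']
          simp only [Quaternion.re_sub, Quaternion.imI_sub, Quaternion.imJ_sub,
            Quaternion.imK_sub, hu, hv]
          linear_combination -hn' - 2 * hcc
        rw [h4]
        exact mul_ne_zero (by norm_num) hNu
      have hchoice : (v.imJ ^ 2 + v.imK ^ 2) ≠ 0 ∨ (v.imI ^ 2 + v.imK ^ 2) ≠ 0 ∨
          (v.imI ^ 2 + v.imJ ^ 2) ≠ 0 := by
        apply three_choice
        intro h0
        apply hNu
        linear_combination hn' + (1/2 : F) * h0
      rcases hchoice with hch | hch | hch
      · let E : ℍ[F] := mkQ 0 1 0 0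
        apply case_B_aux u v E hv hsq hUV
        have : Quaternion.normSq (v * E - E * v) = 4 * (v.imJ ^ 2 + v.imK ^ 2) := by
          rw [Quaternion.normSq_def']
          simp only [Quaternion.re_sub, Quaternion.imI_sub, Quaternion.imJ_sub,
            Quaternion.imK_sub, Quaternion.re_mul, Quaternion.imI_mul, Quaternion.imJ_mul,
            Quaternion.imK_mul, E, hv, mkQ_re, mkQ_imI, mkQ_imJ, mkQ_imK]
          ring
        rw [this]
        exact mul_ne_zero (by norm_num) hch
      · let E : ℍ[F] := mkQ 0 0 1 0
        apply case_B_aux u v E hv hsq hUV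
        have : Quaternion.normSq (v * E - E * v) = 4 * (v.imI ^ 2 + v.imK ^ 2) := by
          rw [Quaternion.normSq_def']
          simp only [Quaternion.re_sub, Quaternion.imI_sub, Quaternion.imJ_sub,
            Quaternion.imK_sub, Quaternion.re_mul, Quaternion.imI_mul, Quaternion.imJ_mul,
            Quaternion.imK_mul, E, hv, mkQ_re, mkQ_imI, mkQ_imJ, mkQ_imK]
          ring
        rw [this]
        exact mul_ne_zero (by norm_num) hch
      · let E : ℍ[F] := mkQ 0 0 0 1
        apply case_B_aux u v E hv hsq hUV
        have : Quaternion.normSq (v * E - E * v) = 4 * (v.imI ^ 2 + v.imJ ^ 2) := by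
          rw [Quaternion.normSq_def']
          simp only [Quaternion.re_sub, Quaternion.imI_sub, Quaternion.imJ_sub,
            Quaternion.imK_sub, Quaternion.re_mul, Quaternion.imI_mul, Quaternion.imJ_mul,
            Quaternion.imK_mul, E, hv, mkQ_re, mkQ_imI, mkQ_imJ, mkQ_imK]
          ring
        rw [this]
        exact mul_ne_zero (by norm_num) hch

end Key2

theorem equiv_of_same_re_normSq_im (F : Type*) [Field F] [CharZero F] (f g : ℍ[F])
    (hf : f.im ≠ 0) (hg : g.im ≠ 0) (hre : f.re = g.re)
    (hvs : Quaternion.normSq f.im = Quaternion.normSq g.im) :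
    ∃ h : ℍ[F], Quaternion.normSq h ≠ 0 ∧ h * f = g * h := by
  obtain ⟨h, h1, h2⟩ := key_pure f.im g.im (Quaternion.re_im f) (Quaternion.re_im g) hf hg hvs
  refine ⟨h, h1, ?_⟩
  calc h * f = h * (↑f.re + f.im) := by rw [f.re_add_im]
    _ = ↑g.re * h + g.im * h := by
        rw [mul_add, h2, ← Quaternion.coe_commutes, hre]
    _ = (↑g.re + g.im) * h := by rw [add_mul]
    _ = g * h := by rw [g.re_add_im]
end

section
/- Let F be a field of characteristic zero and f, g ∈ ℍ[F] with im f ≠ 0, im g ≠ 0, re f = −re g, and normSq (im f) = normSq (im g). Then for b ∈ ℍ[F], the Sylvester equation f * χ + χ * g = b has a solution χ ∈ ℍ[F] if and only if star f * b + b * g = 0. -/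
open Quaternion

private lemma sylv_expand {F : Type*} [Field F] (a : F) (u v w b : ℍ[F])
    (hb : u * b = b * v) :
    ((a : ℍ[F]) + u) * (w * b) + (w * b) * ((-a : F) + v) = (u * w + w * u) * b := by
  have h1 : ((a : F) : ℍ[F]) * (w * b) = (w * b) * ((a : F) : ℍ[F]) := coe_commutes _ _
  have h2 : ((a : ℍ[F]) + u) * (w * b) + (w * b) * ((-a : F) + v)
      = (((a : F) : ℍ[F]) * (w * b) - (w * b) * ((a : F) : ℍ[F])) + (u * w) * b + w * (b * v) := by
    push_cast
    noncomm_ring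
  rw [h2, ← hb, h1]
  noncomm_ring

theorem sylvester_rank_two_solvability (F : Type*) [Field F] [CharZero F]
    (f g : ℍ[F]) (hf : f.im ≠ 0) (hg : g.im ≠ 0) (hre : f.re = -g.re)
    (hvs : Quaternion.normSq f.im = Quaternion.normSq g.im) (b : ℍ[F]) :
    (∃ χ : ℍ[F], f * χ + χ * g = b) ↔ star f * b + b * g = 0 := by
  have hnf : normSq f = normSq g := by
    rw [normSq_def', normSq_def'] at hvs ⊢
    simp only [re_im, imI_im, imJ_im, imK_im] at hvs
    linear_combination hvs + (f.re - g.re) * hre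
  constructor
  · rintro ⟨χ, rfl⟩
    have hgg : g * g = ((2 * g.re : F) : ℍ[F]) * g - ((normSq g : F) : ℍ[F]) := by
      have h1 : star g * g = ((normSq g : F) : ℍ[F]) := star_mul_self g
      have h2 : star g = ((2 * g.re : F) : ℍ[F]) - g := star_eq_two_re_sub g
      calc g * g = ((2 * g.re : F) : ℍ[F]) * g - star g * g := by rw [h2]; noncomm_ring
        _ = _ := by rw [h1]
    have hff : star f * f = ((normSq f : F) : ℍ[F]) := star_mul_self f
    have hsum : star f + f = ((2 * f.re : F) : ℍ[F]) := star_add_self' f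
    calc star f * (f * χ + χ * g) + (f * χ + χ * g) * g
        = (star f * f) * χ + (star f + f) * (χ * g) + χ * (g * g) := by noncomm_ring
      _ = ((normSq f : F) : ℍ[F]) * χ + ((2 * f.re : F) : ℍ[F]) * (χ * g)
            + χ * (((2 * g.re : F) : ℍ[F]) * g - ((normSq g : F) : ℍ[F])) := by
          rw [hff, hsum, hgg]
      _ = 0 := by
          rw [hnf, hre, mul_sub]
          simp only [coe_mul_eq_smul, mul_coe_eq_smul, mul_smul_comm]
          module
  · intro h
    -- from h, derive f.im * b = b * g.im
    have hstf : star f = ((f.re : F) : ℍ[F]) - f.im := by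
      rw [← re_add_im (star f)]
      simp [sub_eq_add_neg]
    have hb : f.im * b = b * g.im := by
      have h3 : ((g.re : F) : ℍ[F]) + g.im = g := re_add_im g
      have h4 : ((f.re : F) : ℍ[F]) = -((g.re : F) : ℍ[F]) := by rw [hre]; push_cast; ring
      have h5 := h
      rw [hstf, ← h3, h4] at h5
      have hcomm : ((g.re : F) : ℍ[F]) * b = b * ((g.re : F) : ℍ[F]) := coe_commutes _ _
      have key : f.im * b - b * g.im
          = (b * ((g.re : F) : ℍ[F]) - ((g.re : F) : ℍ[F]) * b)
            - ((-((g.re : F) : ℍ[F]) - f.im) * b + b * (((g.re : F) : ℍ[F]) + g.im)) := by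
        noncomm_ring
      rw [h5, hcomm, sub_self, sub_zero, sub_eq_zero] at key
      exact key
    -- choose a pure basis quaternion w with f.im * w + w * f.im = c ≠ 0 scalar
    obtain ⟨w, c, hc, hw⟩ : ∃ (w : ℍ[F]) (c : F), c ≠ 0 ∧ f.im * w + w * f.im = (c : ℍ[F]) := by
      by_cases h1 : f.imI = 0
      · by_cases h2 : f.imJ = 0
        · by_cases h3 : f.imK = 0
          · exact absurd (by ext <;> simp [h1, h2, h3]) hf
          · exact ⟨⟨0, 0, 0, 1⟩, -2 * f.imK, by simp [h3], by ext <;> [erw [re_add, re_mul, re_mul]; erw [imI_add, imI_mul, imI_mul]; erw [imJ_add, imJ_mul, imJ_mul]; erw [imK_add, imK_mul, imK_mul]] <;> simp <;> ring⟩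
        · exact ⟨⟨0, 0, 1, 0⟩, -2 * f.imJ, by simp [h2], by ext <;> [erw [re_add, re_mul, re_mul]; erw [imI_add, imI_mul, imI_mul]; erw [imJ_add, imJ_mul, imJ_mul]; erw [imK_add, imK_mul, imK_mul]] <;> simp <;> ring⟩
      · exact ⟨⟨0, 1, 0, 0⟩, -2 * f.imI, by simp [h1], by ext <;> [erw [re_add, re_mul, re_mul]; erw [imI_add, imI_mul, imI_mul]; erw [imJ_add, imJ_mul, imJ_mul]; erw [imK_add, imK_mul, imK_mul]] <;> simp <;> ring⟩
    refine ⟨c⁻¹ • (w * b), ?_⟩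
    have hge : g = ((-f.re : F) : ℍ[F]) + g.im := by
      rw [show (-f.re : F) = g.re by rw [hre, neg_neg]]
      exact (re_add_im g).symm
    have hfe : f = ((f.re : F) : ℍ[F]) + f.im := (re_add_im f).symm
    have key : f * (w * b) + (w * b) * g = (c : ℍ[F]) * b := by
      conv_lhs => rw [hfe, hge]
      rw [sylv_expand f.re f.im g.im w b hb, hw]
    rw [mul_smul_comm, smul_mul_assoc, ← smul_add, key, coe_mul_eq_smul, smul_smul,
      inv_mul_cancel₀ hc, one_smul]
end

section
/- Let F be a field of characteristic zero. Then any two idempotents of ℍ[F] different from 0 and 1 are conjugate by an invertible element: if σ, ρ ∈ ℍ[F] satisfy σ * σ = σ, ρ * ρ = ρ, σ ∉ {0,1} and ρ ∉ {0,1}, then there exists h ∈ ℍ[F] with normSq h ≠ 0 and h * σ = ρ * h (i.e. σ ≃ ρ). -/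
open Quaternion

private lemma idem_struct {F : Type*} [Field F] [CharZero F] (σ : ℍ[F])
    (hσ : σ * σ = σ) (h0 : σ ≠ 0) (h1 : σ ≠ 1) :
    σ.re = 1/2 ∧ σ.imI^2 + σ.imJ^2 + σ.imK^2 = -(1/4) := by
  have er := congrArg QuaternionAlgebra.re hσ
  have ei := congrArg QuaternionAlgebra.imI hσ
  have ej := congrArg QuaternionAlgebra.imJ hσ
  have ek := congrArg QuaternionAlgebra.imK hσ
  simp only [Quaternion.re_mul, Quaternion.imI_mul, Quaternion.imJ_mul,
    Quaternion.imK_mul] at er ei ej ek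
  by_cases hr : σ.re = 1/2
  · refine ⟨hr, ?_⟩
    rw [hr] at er
    linear_combination -er
  · exfalso
    have h2 : (2 * σ.re - 1 : F) ≠ 0 := by
      intro hc; apply hr; linear_combination hc/2
    have hx : σ.imI = 0 := by
      have : σ.imI * (2 * σ.re - 1) = 0 := by linear_combination ei
      rcases mul_eq_zero.mp this with h | h
      · exact h
      · exact absurd h h2
    have hy : σ.imJ = 0 := by
      have : σ.imJ * (2 * σ.re - 1) = 0 := by linear_combination ej
      rcases mul_eq_zero.mp this with h | h
      · exact h
      · exact absurd h h2
    have hz : σ.imK = 0 := by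
      have : σ.imK * (2 * σ.re - 1) = 0 := by linear_combination ek
      rcases mul_eq_zero.mp this with h | h
      · exact h
      · exact absurd h h2
    rw [hx, hy, hz] at er
    have : σ.re * (σ.re - 1) = 0 := by linear_combination er
    rcases mul_eq_zero.mp this with h | h
    · apply h0; ext <;> simp [h, hx, hy, hz]
    · apply h1
      have hre : σ.re = 1 := by linear_combination h
      ext <;> simp [hre, hx, hy, hz]

private lemma flip_lemma {F : Type*} [Field F] [CharZero F] (σ v : ℍ[F]) (hv : v.re = 0)
    (hσr : σ.re = 1/2)
    (horth : v.imI * σ.imI + v.imJ * σ.imJ + v.imK * σ.imK = 0) :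
    v * σ = (1 - σ) * v := by
  ext
  · simp only [Quaternion.re_mul, Quaternion.re_sub, Quaternion.re_one,
      Quaternion.imI_sub, Quaternion.imI_one, Quaternion.imJ_sub, Quaternion.imJ_one,
      Quaternion.imK_sub, Quaternion.imK_one, hv, hσr]
    linear_combination -2*horth
  · simp only [Quaternion.imI_mul, Quaternion.re_sub, Quaternion.re_one,
      Quaternion.imI_sub, Quaternion.imI_one, Quaternion.imJ_sub, Quaternion.imJ_one,
      Quaternion.imK_sub, Quaternion.imK_one, hv, hσr]
    ring
  · simp only [Quaternion.imJ_mul, Quaternion.re_sub, Quaternion.re_one,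
      Quaternion.imI_sub, Quaternion.imI_one, Quaternion.imJ_sub, Quaternion.imJ_one,
      Quaternion.imK_sub, Quaternion.imK_one, hv, hσr]
    ring
  · simp only [Quaternion.imK_mul, Quaternion.re_sub, Quaternion.re_one,
      Quaternion.imI_sub, Quaternion.imI_one, Quaternion.imJ_sub, Quaternion.imJ_one,
      Quaternion.imK_sub, Quaternion.imK_one, hv, hσr]
    ring

private lemma case2_lemma {F : Type*} [Field F] [CharZero F]
    (σ ρ v : ℍ[F]) (hσ : σ * σ = σ) (hρ : ρ * ρ = ρ)
    (hσr : σ.re = 1/2) (hρr : ρ.re = 1/2)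
    (hσn : σ.imI^2 + σ.imJ^2 + σ.imK^2 = -(1/4))
    (hρn : ρ.imI^2 + ρ.imJ^2 + ρ.imK^2 = -(1/4))
    (ht : σ.imI * ρ.imI + σ.imJ * ρ.imJ + σ.imK * ρ.imK = 1/4)
    (hv : v.re = 0)
    (horth : v.imI * σ.imI + v.imJ * σ.imJ + v.imK * σ.imK = 0)
    (hnv : v.imI^2 + v.imJ^2 + v.imK^2 ≠ 0) :
    ∃ h : ℍ[F], Quaternion.normSq h ≠ 0 ∧ h * σ = ρ * h := by
  refine ⟨(ρ - σ) * v, ?_, ?_⟩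
  · rw [map_mul]
    apply mul_ne_zero
    · rw [Quaternion.normSq_def']
      intro hc
      simp only [Quaternion.re_sub, Quaternion.imI_sub, Quaternion.imJ_sub,
        Quaternion.imK_sub, hσr, hρr] at hc
      have : (1 : F) = 0 := by linear_combination -hc + hσn + hρn - 2 * ht
      exact one_ne_zero this
    · rw [Quaternion.normSq_def', hv]
      intro hc
      apply hnv
      linear_combination hc
  · have key1 : v * σ = (1 - σ) * v := flip_lemma σ v hv hσr horth
    have key2 : (ρ - σ) * (1 - σ) = ρ * (ρ - σ) := by
      have e1 : (ρ - σ) * (1 - σ) = ρ - ρ * σ - σ + σ * σ := by noncomm_ring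
      have e2 : ρ * (ρ - σ) = ρ * ρ - ρ * σ := by noncomm_ring
      rw [e1, e2, hσ, hρ]; abel
    calc (ρ - σ) * v * σ = (ρ - σ) * ((1 - σ) * v) := by rw [mul_assoc, key1]
      _ = (ρ - σ) * (1 - σ) * v := by rw [mul_assoc]
      _ = ρ * ((ρ - σ) * v) := by rw [key2, mul_assoc]

theorem idempotents_are_conjugate (F : Type*) [Field F] [CharZero F]
    (σ ρ : ℍ[F]) (hσ : σ * σ = σ) (hρ : ρ * ρ = ρ)
    (hσ0 : σ ≠ 0) (hσ1 : σ ≠ 1) (hρ0 : ρ ≠ 0) (hρ1 : ρ ≠ 1) :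
    ∃ h : ℍ[F], Quaternion.normSq h ≠ 0 ∧ h * σ = ρ * h := by
  obtain ⟨hσr, hσn⟩ := idem_struct σ hσ hσ0 hσ1
  obtain ⟨hρr, hρn⟩ := idem_struct ρ hρ hρ0 hρ1
  by_cases ht : σ.imI * ρ.imI + σ.imJ * ρ.imJ + σ.imK * ρ.imK = 1/4
  · -- degenerate case: go through 1 - σ
    have hvsum : (σ.imJ^2 + σ.imK^2 : F) ≠ 0 ∨ (σ.imI^2 + σ.imK^2 : F) ≠ 0 ∨
        (σ.imI^2 + σ.imJ^2 : F) ≠ 0 := by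
      by_contra hcon
      push_neg at hcon
      obtain ⟨u1, u2, u3⟩ := hcon
      have : ((-1 : F)/2) = 0 := by linear_combination u1 + u2 + u3 - 2 * hσn
      norm_num at this
    rcases hvsum with hu | hu | hu
    · exact case2_lemma σ ρ ⟨0, 0, -σ.imK, σ.imJ⟩ hσ hρ hσr hρr hσn hρn ht rfl
        (by ring) (by intro hc; apply hu; linear_combination hc)
    · exact case2_lemma σ ρ ⟨0, -σ.imK, 0, σ.imI⟩ hσ hρ hσr hρr hσn hρn ht rfl
        (by ring) (by intro hc; apply hu; linear_combination hc)
    · exact case2_lemma σ ρ ⟨0, -σ.imJ, σ.imI, 0⟩ hσ hρ hσr hρr hσn hρn ht rfl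
        (by ring) (by intro hc; apply hu; linear_combination hc)
  · -- generic case
    refine ⟨σ + ρ - 1, ?_, ?_⟩
    · rw [Quaternion.normSq_def']
      intro hc
      apply ht
      simp only [Quaternion.re_sub, Quaternion.re_add, Quaternion.re_one,
        Quaternion.imI_sub, Quaternion.imI_add, Quaternion.imI_one,
        Quaternion.imJ_sub, Quaternion.imJ_add, Quaternion.imJ_one,
        Quaternion.imK_sub, Quaternion.imK_add, Quaternion.imK_one,
        hσr, hρr] at hc
      linear_combination hc/2 - hσn/2 - hρn/2
    · have e1 : (σ + ρ - 1) * σ = σ * σ + ρ * σ - σ := by noncomm_ring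
      have e2 : ρ * (σ + ρ - 1) = ρ * σ + ρ * ρ - ρ := by noncomm_ring
      rw [e1, e2, hσ, hρ]; abel
end
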